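/- arXiv:1303.7146 — 3 statements merged into one kernel-verified Lean document; each statement's English description precedes it below -/
import Mathlib

section
/- Let (X, δ) be a hyperconvex and bounded diversity with induced metric space (X, d). Then every nonexpansive mapping T : (X, d) → (X, d) has a fixed point, i.e., there exists x ∈ X with T(x) = x. -/
/-- A diversity on `X`: a real-valued function on finite subsets of `X` which is
nonnegative, vanishes exactly on sets of cardinality at most one, and satisfies the
triangle inequality `δ(A ∪ C) ≤ δ(A ∪ B) + δ(B ∪ C)` for nonempty `B`. -/
structure Diversity (X : Type*) [DecidableEq X] where
  delta : Finset X → ℝ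
  nonneg : ∀ A, 0 ≤ delta A
  eq_zero_iff : ∀ A, delta A = 0 ↔ A.card ≤ 1
  triangle : ∀ A B C : Finset X, B.Nonempty →
    delta (A ∪ C) ≤ delta (A ∪ B) + delta (B ∪ C)

namespace Diversity

variable {X : Type*} [DecidableEq X]

/-- A diversity is hyperconvex if for every `r : ⟨X⟩ → ℝ` with `r ∅ = 0` such that
`δ(⋃_{A ∈ 𝒜} A) ≤ ∑_{A ∈ 𝒜} r A` for every finite collection `𝒜` of finite subsets
of `X`, there is `z ∈ X` with `δ({z} ∪ Y) ≤ r Y` for all finite `Y ⊆ X`. -/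
def Hyperconvex (D : Diversity X) : Prop :=
  ∀ r : Finset X → ℝ, r ∅ = 0 →
    (∀ 𝒜 : Finset (Finset X), D.delta (𝒜.sup id) ≤ ∑ A ∈ 𝒜, r A) →
    ∃ z : X, ∀ Y : Finset X, D.delta (insert z Y) ≤ r Y

/-- A diversity is bounded if its values are uniformly bounded above. -/
def Bounded (D : Diversity X) : Prop :=
  ∃ M : ℝ, 0 ≤ M ∧ ∀ A : Finset X, D.delta A ≤ M

end Diversity

/-!
Call `r : Finset X → ℝ` admissible when it satisfies the hypothesis in the definition of
hyperconvexity, and let `ball r` be the set of points that hyperconvexity then provides.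
Admissibility passes to infima of chains, so by Zorn's lemma there is an admissible `r` which is
minimal among those whose ball is `T`-invariant; its ball `A` is nonempty by hyperconvexity.

Let `p` be the supremum of `δ {x, y}` over `x, y ∈ A` and `M` a bound for `δ`. If `p > 0`, put
`ρ = M p / (M + p) < p`. Chaining pairs gives `δ F ≤ min M ((|F| - 1) p) ≤ |F| ρ` for finite
`F ⊆ A`, and this is exactly what keeps `r` admissible when its values at the singletons `{a}`,
`a ∈ A`, are lowered to `ρ`. Nonexpansiveness of `T` and minimality make the ball of the lowered
function `T`-invariant, so by minimality it is still `A`: all pairs in `A` are within `ρ < p`, a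
contradiction. Hence `p = 0`, `A` is a single point, and `T` fixes it.
-/

theorem IsChain.exists_mem_forall_apply_lt {ι α : Type*} [Preorder α] {c : Set (ι → α)}
    (hc : IsChain (· ≤ ·) c) (hne : c.Nonempty) (s : Finset ι) {b : ι → α}
    (hb : ∀ i ∈ s, ∃ f ∈ c, f i < b i) : ∃ f ∈ c, ∀ i ∈ s, f i < b i := by
  classical
  induction s using Finset.induction_on with
  | empty => exact hne.imp fun f hf => ⟨hf, by simp⟩
  | insert i s _ ih =>
    obtain ⟨f, hf, hfs⟩ := ih fun j hj => hb j (Finset.mem_insert_of_mem hj)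
    obtain ⟨g, hg, hgi⟩ := hb i (Finset.mem_insert_self i s)
    simp only [Finset.forall_mem_insert]
    rcases hc.total hf hg with hfg | hgf
    · exact ⟨f, hf, (hfg i).trans_lt hgi, hfs⟩
    · exact ⟨g, hg, hgi, fun j hj => (hgf j).trans_lt (hfs j hj)⟩

theorem Finset.card_sup_id_le {α : Type*} [DecidableEq α] {𝒜 : Finset (Finset α)}
    (h : ∀ A ∈ 𝒜, A.card ≤ 1) : (𝒜.sup id).card ≤ 𝒜.card := by
  rw [Finset.sup_eq_biUnion]
  exact (Finset.card_biUnion_le.trans (Finset.sum_le_card_nsmul 𝒜 _ 1 h)).trans_eq (by simp)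

theorem min_le_add_one_mul_div {a b : ℝ} (ha : 0 < a) (hb : 0 < b) (k : ℝ) :
    min a (k * b) ≤ (k + 1) * (a * b / (a + b)) := by
  rw [mul_div_assoc', le_div_iff₀ (by positivity)]
  rcases le_total a (k * b) with h | h
  · rw [min_eq_left h]
    nlinarith
  · rw [min_eq_right h]
    nlinarith

namespace Diversity

section CapOnSingletons

variable {X : Type*} {r : Finset X → ℝ} {s : Set X} {ρ : ℝ}

open Classical in
noncomputable def capOnSingletons (r : Finset X → ℝ) (s : Set X) (ρ : ℝ) : Finset X → ℝ :=
  fun Y => if ∃ a ∈ s, Y = {a} then min (r Y) ρ else r Y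

theorem capOnSingletons_le : capOnSingletons r s ρ ≤ r := fun Y => by
  unfold capOnSingletons
  split_ifs <;> simp

theorem capOnSingletons_empty : capOnSingletons r s ρ ∅ = r ∅ :=
  if_neg fun ⟨a, _, h⟩ => Finset.singleton_ne_empty a h.symm

theorem capOnSingletons_eq_or (Y : Finset X) :
    capOnSingletons r s ρ Y = r Y ∨ ∃ a ∈ s, Y = {a} ∧ capOnSingletons r s ρ Y = ρ := by
  unfold capOnSingletons
  split_ifs with hY
  · obtain ⟨a, ha, rfl⟩ := hY
    exact (min_choice _ _).imp id fun h => ⟨a, ha, rfl, h⟩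
  · exact Or.inl rfl

end CapOnSingletons

variable {X : Type*} [DecidableEq X] (D : Diversity X)

theorem delta_empty : D.delta ∅ = 0 := (D.eq_zero_iff ∅).2 (by simp)

theorem delta_singleton (x : X) : D.delta {x} = 0 := (D.eq_zero_iff {x}).2 (by simp)

theorem eq_of_delta_pair_le_zero {x y : X} (h : D.delta {x, y} ≤ 0) : x = y := by
  by_contra hxy
  have hcard := (D.eq_zero_iff {x, y}).1 (le_antisymm h (D.nonneg _))
  rw [Finset.card_pair hxy] at hcard
  omega

theorem delta_union_le (a : X) (A C : Finset X) :
    D.delta (A ∪ C) ≤ D.delta (insert a A) + D.delta (insert a C) := by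
  rw [Finset.insert_eq, Finset.insert_eq, Finset.union_comm {a} A]
  exact D.triangle A {a} C (Finset.singleton_nonempty a)

theorem delta_le_delta_insert (a : X) (A : Finset X) : D.delta A ≤ D.delta (insert a A) := by
  simpa [delta_singleton] using D.delta_union_le a A ∅

theorem delta_insert_sup_le_sum (z : X) (𝒜 : Finset (Finset X)) :
    D.delta (insert z (𝒜.sup id)) ≤ ∑ A ∈ 𝒜, D.delta (insert z A) := by
  induction 𝒜 using Finset.induction_on with
  | empty => simp [delta_singleton]
  | insert A 𝒜 hA ih =>
    rw [Finset.sup_insert, Finset.sum_insert hA, id, Finset.sup_eq_union, ← Finset.union_insert]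
    calc D.delta (A ∪ insert z (𝒜.sup id))
        ≤ D.delta (insert z A) + D.delta (insert z (insert z (𝒜.sup id))) :=
          D.delta_union_le z _ _
      _ ≤ _ := by rw [Finset.insert_idem]; gcongr

theorem delta_insert_le_sum_pair (a : X) (G : Finset X) :
    D.delta (insert a G) ≤ ∑ b ∈ G, D.delta {a, b} := by
  induction G using Finset.induction_on with
  | empty => simp [delta_singleton]
  | insert b G hb ih =>
    rw [Finset.sum_insert hb, Finset.insert_comm, Finset.insert_eq b]
    calc D.delta ({b} ∪ insert a G) ≤ D.delta {a, b} + D.delta (insert a (insert a G)) :=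
          D.delta_union_le a _ _
      _ ≤ _ := by rw [Finset.insert_idem]; gcongr

theorem delta_le_card_mul_of_delta_pair_le {M p : ℝ} (hM : ∀ A, D.delta A ≤ M) (hM0 : 0 < M)
    (hp : 0 < p) {F : Finset X} (hF : ∀ x ∈ F, ∀ y ∈ F, D.delta {x, y} ≤ p) :
    D.delta F ≤ F.card * (M * p / (M + p)) := by
  rcases F.eq_empty_or_nonempty with rfl | ⟨a, ha⟩
  · simp [delta_empty]
  have hchain : D.delta F ≤ (F.erase a).card * p :=
    calc D.delta F = D.delta (insert a (F.erase a)) := by rw [Finset.insert_erase ha]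
      _ ≤ ∑ b ∈ F.erase a, D.delta {a, b} := D.delta_insert_le_sum_pair a _
      _ ≤ (F.erase a).card * p := by
          simpa using Finset.sum_le_card_nsmul _ _ p fun b hb =>
            hF a ha b (Finset.mem_of_mem_erase hb)
  calc D.delta F ≤ min M ((F.erase a).card * p) := le_min (hM F) hchain
    _ ≤ ((F.erase a).card + 1) * (M * p / (M + p)) := min_le_add_one_mul_div hM0 hp _
    _ = F.card * (M * p / (M + p)) := by rw [← Finset.card_erase_add_one ha]; push_cast; ring

def ball (r : Finset X → ℝ) : Set X := {z | ∀ Y, D.delta (insert z Y) ≤ r Y}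

def IsAdmissible (r : Finset X → ℝ) : Prop :=
  r ∅ = 0 ∧ ∀ 𝒜 : Finset (Finset X), D.delta (𝒜.sup id) ≤ ∑ A ∈ 𝒜, r A

def IsInvariantAdmissible (T : X → X) (r : Finset X → ℝ) : Prop :=
  D.IsAdmissible r ∧ Set.MapsTo T (D.ball r) (D.ball r)

variable {D}

theorem Hyperconvex.nonempty_ball (hH : D.Hyperconvex) {r : Finset X → ℝ}
    (hr : D.IsAdmissible r) : (D.ball r).Nonempty :=
  hH r hr.1 hr.2

theorem ball_mono {r s : Finset X → ℝ} (h : r ≤ s) : D.ball r ⊆ D.ball s :=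
  fun _ hz Y => (hz Y).trans (h Y)

theorem IsAdmissible.nonneg {r : Finset X → ℝ} (hr : D.IsAdmissible r) (Y : Finset X) :
    0 ≤ r Y :=
  (D.nonneg Y).trans (by simpa using hr.2 {Y})

theorem isAdmissible_of_mem_ball {r : Finset X → ℝ} {z : X} (h0 : r ∅ = 0)
    (hz : z ∈ D.ball r) : D.IsAdmissible r :=
  ⟨h0, fun 𝒜 => calc
    D.delta (𝒜.sup id) ≤ D.delta (insert z (𝒜.sup id)) := D.delta_le_delta_insert z _
    _ ≤ ∑ A ∈ 𝒜, D.delta (insert z A) := D.delta_insert_sup_le_sum z 𝒜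
    _ ≤ ∑ A ∈ 𝒜, r A := Finset.sum_le_sum fun A _ => hz A⟩

section Bounded

variable {M : ℝ}

theorem mem_ball_ite (hM : ∀ A, D.delta A ≤ M) (z : X) :
    z ∈ D.ball fun Y => if Y = ∅ then 0 else M := by
  intro Y
  dsimp only
  split_ifs with hY
  · simp [hY, delta_singleton]
  · exact hM _

theorem isAdmissible_ite (hM : ∀ A, D.delta A ≤ M) (hM0 : 0 ≤ M) :
    D.IsAdmissible fun Y => if Y = ∅ then 0 else M := by
  refine ⟨if_pos rfl, fun 𝒜 => ?_⟩
  have hnonneg (Y : Finset X) : 0 ≤ if Y = ∅ then 0 else M := by split_ifs <;> simp [hM0]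
  by_cases h : 𝒜.sup id = ∅
  · rw [h, delta_empty]
    exact Finset.sum_nonneg fun Y _ => hnonneg Y
  · obtain ⟨A, hA, hAne⟩ : ∃ A ∈ 𝒜, A ≠ ∅ := by
      simpa [← Finset.bot_eq_empty, Finset.sup_eq_bot_iff] using h
    calc D.delta (𝒜.sup id) ≤ M := hM _
      _ = if A = ∅ then 0 else M := (if_neg hAne).symm
      _ ≤ _ := Finset.single_le_sum (fun Y _ => hnonneg Y) hA

end Bounded

section Chain

variable {c : Set (Finset X → ℝ)}

theorem bddBelow_of_forall_isAdmissible (hc : ∀ r ∈ c, D.IsAdmissible r) : BddBelow c :=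
  ⟨0, fun r hr Y => (hc r hr).nonneg Y⟩

theorem ball_csInf (hne : c.Nonempty) (hbdd : BddBelow c) :
    D.ball (sInf c) = ⋂ r ∈ c, D.ball r := by
  ext z
  simp only [ball, Set.mem_iInter, Set.mem_ofPred_eq]
  refine ⟨fun hz r hr Y => (hz Y).trans (csInf_le hbdd hr Y), fun hz Y => ?_⟩
  rw [sInf_apply_eq_sInf_image]
  exact le_csInf (hne.image _) (Set.forall_mem_image.2 fun r hr => hz r hr Y)

theorem isAdmissible_csInf (hc : IsChain (· ≤ ·) c) (hne : c.Nonempty)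
    (hadm : ∀ r ∈ c, D.IsAdmissible r) : D.IsAdmissible (sInf c) := by
  have hbdd := bddBelow_of_forall_isAdmissible hadm
  obtain ⟨r, hr⟩ := id hne
  refine ⟨le_antisymm ((csInf_le hbdd hr ∅).trans_eq (hadm r hr).1) ?_, fun 𝒜 => ?_⟩
  · rw [sInf_apply_eq_sInf_image]
    exact le_csInf (hne.image _) (Set.forall_mem_image.2 fun r hr => (hadm r hr).nonneg ∅)
  rcases 𝒜.eq_empty_or_nonempty with rfl | h𝒜
  · simp [delta_empty]
  refine le_of_forall_pos_lt_add fun ε hε => ?_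
  set b := fun A => sInf c A + ε / 𝒜.card
  have hb : ∀ A ∈ 𝒜, ∃ r ∈ c, r A < b A := fun A _ => by
    have hlt : sInf c A < b A := lt_add_of_pos_right _ (by positivity)
    rw [sInf_apply_eq_sInf_image] at hlt
    obtain ⟨_, ⟨r, hr, rfl⟩, h⟩ := exists_lt_of_csInf_lt (hne.image _) hlt
    exact ⟨r, hr, h⟩
  obtain ⟨r, hr, hrb⟩ := hc.exists_mem_forall_apply_lt hne 𝒜 hb
  calc D.delta (𝒜.sup id) ≤ ∑ A ∈ 𝒜, r A := (hadm r hr).2 𝒜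
    _ < ∑ A ∈ 𝒜, b A := Finset.sum_lt_sum_of_nonempty h𝒜 hrb
    _ = ∑ A ∈ 𝒜, sInf c A + ε := by
      simp only [b, Finset.sum_add_distrib, Finset.sum_const, nsmul_eq_mul]
      field_simp

theorem isInvariantAdmissible_csInf {T : X → X} (hc : IsChain (· ≤ ·) c) (hne : c.Nonempty)
    (hinv : ∀ r ∈ c, D.IsInvariantAdmissible T r) : D.IsInvariantAdmissible T (sInf c) := by
  refine ⟨isAdmissible_csInf hc hne fun r hr => (hinv r hr).1, ?_⟩
  rw [ball_csInf hne (bddBelow_of_forall_isAdmissible fun r hr => (hinv r hr).1)]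
  exact Set.mapsTo_iInter₂_iInter₂ fun r hr => (hinv r hr).2

end Chain

theorem Bounded.exists_minimal_isInvariantAdmissible (hB : D.Bounded) (T : X → X) :
    ∃ r, Minimal (D.IsInvariantAdmissible T) r := by
  obtain ⟨M, hM0, hM⟩ := hB
  have hchain (c : Set (Finset X → ℝ)) (hcS : c ⊆ {r | D.IsInvariantAdmissible T r})
      (hc : IsChain (· ≥ ·) c) (r : Finset X → ℝ) (hr : r ∈ c) :
      ∃ lb ∈ {r | D.IsInvariantAdmissible T r}, ∀ s ∈ c, lb ≤ s :=
    ⟨sInf c, isInvariantAdmissible_csInf hc.symm ⟨r, hr⟩ hcS,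
      fun _ hs => csInf_le (bddBelow_of_forall_isAdmissible fun r hr => (hcS hr).1) hs⟩
  obtain ⟨r, -, hr⟩ := zorn_le_nonempty₀ (α := (Finset X → ℝ)ᵒᵈ) _ hchain _
    ⟨isAdmissible_ite hM hM0, fun z _ => mem_ball_ite hM (T z)⟩
  exact ⟨r, hr⟩

section Modify

variable {r r' : Finset X → ℝ} {s : Set X} {ρ : ℝ}

theorem delta_sup_union_le {a : X} {F : Finset X} (ha : a ∈ D.ball r) (haF : a ∈ F)
    (𝒜 : Finset (Finset X)) : D.delta (𝒜.sup id ∪ F) ≤ ∑ A ∈ 𝒜, r A + D.delta F :=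
  calc D.delta (𝒜.sup id ∪ F) ≤ D.delta (insert a (𝒜.sup id)) + D.delta (insert a F) :=
        D.delta_union_le a _ _
    _ ≤ ∑ A ∈ 𝒜, r A + D.delta F := by
        rw [Finset.insert_eq_of_mem haF]
        gcongr
        exact (D.delta_insert_sup_le_sum a 𝒜).trans (Finset.sum_le_sum fun A _ => ha A)

theorem IsAdmissible.of_eq_or_eq_singleton (hr : D.IsAdmissible r) (hs : s ⊆ D.ball r)
    (hρ0 : 0 ≤ ρ) (hρ : ∀ F : Finset X, ↑F ⊆ s → D.delta F ≤ F.card * ρ) (h0 : r' ∅ = 0)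
    (hr' : ∀ Y, r' Y = r Y ∨ ∃ a ∈ s, Y = {a} ∧ r' Y = ρ) : D.IsAdmissible r' := by
  refine ⟨h0, fun 𝒜 => ?_⟩
  set ℬ := 𝒜.filter fun Y => r' Y ≠ r Y
  have hℬ (Y) (hY : Y ∈ ℬ) : ∃ a ∈ s, Y = {a} ∧ r' Y = ρ :=
    (hr' Y).resolve_left (Finset.mem_filter.1 hY).2
  rcases ℬ.eq_empty_or_nonempty with hℬe | ⟨_, hYℬ⟩
  · have hsum : ∑ A ∈ 𝒜, r' A = ∑ A ∈ 𝒜, r A :=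
      Finset.sum_congr rfl fun Y hY => by
        by_contra hne
        exact Finset.notMem_empty Y (hℬe ▸ Finset.mem_filter.2 ⟨hY, hne⟩)
    rw [hsum]
    exact hr.2 𝒜
  obtain ⟨a, has, rfl, -⟩ := hℬ _ hYℬ
  set 𝒜₁ := 𝒜.filter fun Y => r' Y = r Y
  have hF : ↑(ℬ.sup id) ⊆ s := fun x hx => by
    obtain ⟨Y, hY, hxY⟩ := Finset.mem_sup.1 hx
    obtain ⟨b, hb, rfl, -⟩ := hℬ Y hY
    simpa [Finset.mem_singleton.1 hxY] using hb
  have hcard : (ℬ.sup id).card ≤ ℬ.card := Finset.card_sup_id_le fun Y hY => by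
    obtain ⟨b, -, rfl, -⟩ := hℬ Y hY
    simp
  -- The lowered values sit on singletons of `s`; their union is attached to the rest of
  -- `𝒜.sup id` through its point `a`, which lies in `ball r`.
  calc D.delta (𝒜.sup id) = D.delta (𝒜₁.sup id ∪ ℬ.sup id) := by
        rw [← Finset.sup_eq_union, ← Finset.sup_union, Finset.filter_union_filter_not_eq]
    _ ≤ ∑ A ∈ 𝒜₁, r A + D.delta (ℬ.sup id) :=
        delta_sup_union_le (hs has) (Finset.mem_sup.2 ⟨{a}, hYℬ, Finset.mem_singleton_self a⟩)
          𝒜₁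
    _ ≤ ∑ A ∈ 𝒜₁, r A + ℬ.card * ρ := by
        gcongr
        exact (hρ _ hF).trans (by gcongr)
    _ = ∑ A ∈ 𝒜, r' A := by
        rw [← Finset.sum_filter_add_sum_filter_not 𝒜 fun Y => r' Y = r Y,
          Finset.sum_congr rfl fun Y hY => (Finset.mem_filter.1 hY).2,
          Finset.sum_congr rfl fun Y hY => (hℬ Y hY).choose_spec.2.2, Finset.sum_const,
          nsmul_eq_mul]

theorem mem_ball_capOnSingletons {z : X} :
    z ∈ D.ball (capOnSingletons r s ρ) ↔ z ∈ D.ball r ∧ ∀ a ∈ s, D.delta {z, a} ≤ ρ := by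
  refine ⟨fun hz => ⟨ball_mono capOnSingletons_le hz, fun a ha => ?_⟩, fun ⟨hz, hzs⟩ Y => ?_⟩
  · refine (hz {a}).trans ?_
    rw [capOnSingletons, if_pos ⟨a, ha, rfl⟩]
    exact min_le_right _ _
  · unfold capOnSingletons
    split_ifs with hY
    · obtain ⟨a, ha, rfl⟩ := hY
      exact le_min (hz _) (hzs a ha)
    · exact hz Y

theorem isAdmissible_capOnSingletons (hr : D.IsAdmissible r) (hs : s ⊆ D.ball r) (hρ0 : 0 ≤ ρ)
    (hρ : ∀ F : Finset X, ↑F ⊆ s → D.delta F ≤ F.card * ρ) :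
    D.IsAdmissible (capOnSingletons r s ρ) :=
  hr.of_eq_or_eq_singleton hs hρ0 hρ (capOnSingletons_empty.trans hr.1) capOnSingletons_eq_or

end Modify

section Minimal

variable {T : X → X} {r : Finset X → ℝ}

theorem le_of_mapsTo_ball_of_minimal (hmin : Minimal (D.IsInvariantAdmissible T) r)
    (hne : (D.ball r).Nonempty) {r' : Finset X → ℝ} (hle : r' ≤ r) (h0 : r' ∅ = 0)
    (hT : Set.MapsTo T (D.ball r) (D.ball r')) : r ≤ r' := by
  obtain ⟨z, hz⟩ := hne
  exact hmin.le_of_le ⟨isAdmissible_of_mem_ball h0 (hT hz), hT.mono_left (ball_mono hle)⟩ hle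

theorem mapsTo_ball_capOnSingletons_of_minimal (hmin : Minimal (D.IsInvariantAdmissible T) r)
    (hne : (D.ball r).Nonempty) (hT : ∀ x y, D.delta {T x, T y} ≤ D.delta {x, y}) (ρ : ℝ) :
    Set.MapsTo T (D.ball (capOnSingletons r (D.ball r) ρ))
      (D.ball (capOnSingletons r (D.ball r) ρ)) := by
  intro x hx
  rw [mem_ball_capOnSingletons] at hx ⊢
  obtain ⟨hxr, hxρ⟩ := hx
  refine ⟨hmin.prop.2 hxr, fun a ha => ?_⟩
  -- Minimality, applied to `r` lowered at `{T x}` only, puts `T x` within `ρ` of all of `ball r`.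
  have hle : r ≤ capOnSingletons r {T x} ρ :=
    le_of_mapsTo_ball_of_minimal hmin hne capOnSingletons_le
      (capOnSingletons_empty.trans hmin.prop.1.1) fun b hb => mem_ball_capOnSingletons.2
        ⟨hmin.prop.2 hb, fun _ h => (Set.mem_singleton_iff.1 h) ▸
          (hT b x).trans (Finset.pair_comm x b ▸ hxρ b hb)⟩
  rw [Finset.pair_comm]
  exact (mem_ball_capOnSingletons.1 (ball_mono hle ha)).2 (T x) rfl

theorem delta_pair_le_of_minimal (hmin : Minimal (D.IsInvariantAdmissible T) r)
    (hne : (D.ball r).Nonempty) (hT : ∀ x y, D.delta {T x, T y} ≤ D.delta {x, y})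
    {ρ : ℝ} (hρ0 : 0 ≤ ρ) (hρ : ∀ F : Finset X, ↑F ⊆ D.ball r → D.delta F ≤ F.card * ρ)
    {x y : X} (hx : x ∈ D.ball r) (hy : y ∈ D.ball r) : D.delta {x, y} ≤ ρ := by
  have hle : r ≤ capOnSingletons r (D.ball r) ρ :=
    hmin.le_of_le ⟨isAdmissible_capOnSingletons hmin.prop.1 subset_rfl hρ0 hρ,
      mapsTo_ball_capOnSingletons_of_minimal hmin hne hT ρ⟩ capOnSingletons_le
  exact (mem_ball_capOnSingletons.1 (ball_mono hle hx)).2 y hy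

theorem delta_pair_le_mul_div_of_minimal (hmin : Minimal (D.IsInvariantAdmissible T) r)
    (hne : (D.ball r).Nonempty) (hT : ∀ x y, D.delta {T x, T y} ≤ D.delta {x, y}) {M p : ℝ}
    (hM : ∀ A, D.delta A ≤ M) (hM0 : 0 < M) (hp : 0 < p)
    (hpair : ∀ x ∈ D.ball r, ∀ y ∈ D.ball r, D.delta {x, y} ≤ p) {x y : X}
    (hx : x ∈ D.ball r) (hy : y ∈ D.ball r) : D.delta {x, y} ≤ M * p / (M + p) :=
  delta_pair_le_of_minimal hmin hne hT (by positivity)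
    (fun _ hF => D.delta_le_card_mul_of_delta_pair_le hM hM0 hp fun x hx y hy =>
      hpair x (hF hx) y (hF hy)) hx hy

end Minimal

end Diversity

/-- If `(X, δ)` is a hyperconvex and bounded diversity and
`T : X → X` is nonexpansive with respect to the induced metric `d(x,y) = δ {x,y}`,
then `T` has a fixed point. -/
theorem fixed_point_of_bounded_hyperconvex_diversity
    {X : Type*} [DecidableEq X] (D : Diversity X)
    (hH : D.Hyperconvex) (hB : D.Bounded)
    (T : X → X)
    (hT : ∀ x y : X, D.delta {T x, T y} ≤ D.delta {x, y}) :
    ∃ x : X, T x = x := by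
  obtain ⟨r, hr⟩ := hB.exists_minimal_isInvariantAdmissible T
  obtain ⟨z, hz⟩ := hH.nonempty_ball hr.prop.1
  obtain ⟨M, -, hM⟩ := hB
  set pairs := Set.image2 (fun x y => D.delta {x, y}) (D.ball r) (D.ball r)
  have hpairs : pairs.Nonempty := ⟨_, Set.mem_image2_of_mem hz hz⟩
  have hbdd : BddAbove pairs := ⟨M, Set.forall_mem_image2.2 fun _ _ _ _ => hM _⟩
  set p := sSup pairs
  have hpair (x) (hx : x ∈ D.ball r) (y) (hy : y ∈ D.ball r) : D.delta {x, y} ≤ p :=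
    le_csSup hbdd (Set.mem_image2_of_mem hx hy)
  have hp : p ≤ 0 := by
    by_contra! hp
    have hM0 : 0 < M := hp.trans_le (csSup_le hpairs (Set.forall_mem_image2.2 fun _ _ _ _ => hM _))
    have hshrink : p ≤ M * p / (M + p) :=
      csSup_le hpairs <| Set.forall_mem_image2.2 fun x hx y hy =>
        Diversity.delta_pair_le_mul_div_of_minimal hr ⟨z, hz⟩ hT hM hM0 hp hpair hx hy
    rw [le_div_iff₀ (by positivity)] at hshrink
    nlinarith
  exact ⟨z, D.eq_of_delta_pair_le_zero ((hpair _ (hr.prop.2 hz) z hz).trans hp)⟩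
end

section
/- There exist a hyperconvex diversity (X, δ) with bounded induced metric space and a decreasing sequence (X_n)_{n≥1} of subsets of X such that each restriction (X_n, δ) is a hyperconvex diversity while ⋂_{n≥1} X_n = ∅. In particular, decreasing sequences of hyperconvex diversities with bounded induced metric spaces do not have the nonempty intersection property in general. -/
namespace Diversity

variable {X : Type*} [DecidableEq X]

/-- The restriction of a diversity to a subset `H ⊆ X`. -/
def restrict (D : Diversity X) (H : Set X) : Diversity H where
  delta A := D.delta (A.image Subtype.val)
  nonneg A := D.nonneg _
  eq_zero_iff A := by
    rw [D.eq_zero_iff, Finset.card_image_of_injective A Subtype.val_injective]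
  triangle A B C hB := by
    have h := D.triangle (A.image Subtype.val) (B.image Subtype.val) (C.image Subtype.val)
      (hB.image _)
    simpa [Finset.image_union] using h

end Diversity

/-!
The example is the tight span of the diversity `δ(A) = (|A| - 1)⁺` on `ℕ`. Its points are the
profiles `p : Finset ℕ → ℝ` that are admissible, `δ(⋃ 𝒟) ≤ ∑_{D ∈ 𝒟} p D`, and tight,
`p A = sup_𝒟 (δ(A ∪ ⋃ 𝒟) - ∑_{D ∈ 𝒟} p D)`; its diversity
`δ_T(F) = sup (δ(⋃_{p ∈ F} ⋃ 𝒜ₚ) - ∑_{p ∈ F} ∑_{A ∈ 𝒜ₚ} p A)` is at most `|F| - 1`.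
A tight span is hyperconvex: given admissible radii `R`, a profile that is minimal (by Zorn's
lemma) among those compatible with `R` is tight, and it is the required point.

`S n` consists of the profiles with `p A = p (A ∩ [n, ∞)) + |A \ [n, ∞)|`. Extension of profiles
by this formula is an isometry from the tight span of `[n, ∞)` onto `S n`, so `S n` is
hyperconvex. A profile lying in every `S n` is `p A = |A|`, which is not tight.
-/

open Finset

namespace Finset

variable {ι α γ : Type*} [DecidableEq α]

theorem sum_union_le_of_nonneg [DecidableEq ι] {s t : Finset ι} {f : ι → ℝ} (hf : ∀ i, 0 ≤ f i) :
    ∑ i ∈ s ∪ t, f i ≤ ∑ i ∈ s, f i + ∑ i ∈ t, f i := by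
  rw [← sum_union_inter]
  linarith [sum_nonneg fun i (_ : i ∈ s ∩ t) => hf i]

theorem sum_insert_le_of_nonneg [DecidableEq ι] {s : Finset ι} {f : ι → ℝ} (hf : ∀ i, 0 ≤ f i)
    (a : ι) : ∑ i ∈ insert a s, f i ≤ f a + ∑ i ∈ s, f i := by
  rw [insert_eq, ← sum_singleton f a]
  exact sum_union_le_of_nonneg hf

theorem card_sup_le_sum_card (s : Finset ι) (A : ι → Finset α) :
    #(s.sup A) ≤ ∑ i ∈ s, #(A i) := by
  rw [sup_eq_biUnion]; exact card_biUnion_le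

theorem sup_id_eq_union_sdiff {s : Finset (Finset α)} {A : Finset α} (hA : A ∈ s) :
    s.sup id = A ∪ (s \ {A}).sup id := by
  conv_lhs => rw [← insert_erase hA, sup_insert, ← sdiff_singleton_eq_erase]
  rfl

theorem filter_sup (p : α → Prop) [DecidablePred p] (s : Finset ι) (A : ι → Finset α) :
    (s.sup A).filter p = s.sup fun i => (A i).filter p :=
  apply_sup_eq_sup_comp _ (filter_union p) (filter_empty p)

theorem map_sup_eq_sup_map [DecidableEq γ] (f : α ↪ γ) (s : Finset ι) (A : ι → Finset α) :
    (s.sup A).map f = s.sup fun i => (A i).map f :=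
  apply_sup_eq_sup_comp _ (fun _ _ => map_union _ _) (map_empty f)

theorem subtype_union (p : α → Prop) [DecidablePred p] (s t : Finset α) :
    (s ∪ t).subtype p = s.subtype p ∪ t.subtype p := by
  ext; simp

theorem subtype_sup (p : α → Prop) [DecidablePred p] (s : Finset ι) (A : ι → Finset α) :
    (s.sup A).subtype p = s.sup fun i => (A i).subtype p :=
  apply_sup_eq_sup_comp _ (subtype_union p) rfl

omit [DecidableEq α] in
@[simp] theorem subtype_map_subtype (p : α → Prop) [DecidablePred p] (B : Finset (Subtype p)) :
    (B.map (.subtype p)).subtype p = B := by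
  ext x; simp [x.2]

omit [DecidableEq α] in
@[simp] theorem filter_not_map_subtype (p : α → Prop) [DecidablePred p] (B : Finset (Subtype p)) :
    (B.map (.subtype p)).filter (¬p ·) = ∅ :=
  filter_eq_empty_iff.mpr fun _ hx => not_not.mpr (property_of_mem_map_subtype B hx)

end Finset

theorem IsChain.exists_forall_lt_add {ι : Type*} {c : Set (ι → ℝ)}
    (hc : IsChain (· ≤ ·) c) (hne : c.Nonempty) {g : ι → ℝ}
    (hg : ∀ i, ∀ δ > 0, ∃ f ∈ c, f i < g i + δ) (s : Finset ι) {δ : ℝ} (hδ : 0 < δ) :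
    ∃ f ∈ c, ∀ i ∈ s, f i < g i + δ := by
  classical
  induction s using Finset.induction_on with
  | empty => obtain ⟨f, hf⟩ := hne; exact ⟨f, hf, by simp⟩
  | insert i s _ ih =>
    obtain ⟨f₁, hf₁, h₁⟩ := ih
    obtain ⟨f₂, hf₂, h₂⟩ := hg i δ hδ
    rcases hc.total hf₁ hf₂ with hle | hle
    · exact ⟨f₁, hf₁, (forall_mem_insert _ _ _).mpr ⟨(hle i).trans_lt h₂, h₁⟩⟩
    · exact ⟨f₂, hf₂, (forall_mem_insert _ _ _).mpr ⟨h₂, fun j hj => (hle j).trans_lt (h₁ j hj)⟩⟩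

theorem Diversity.Hyperconvex.of_equiv {X Y : Type*} [DecidableEq X] [DecidableEq Y]
    {D : Diversity X} {D' : Diversity Y} (hD : D.Hyperconvex) (e : X ≃ Y)
    (he : ∀ A, D'.delta (A.map e.toEmbedding) = D.delta A) : D'.Hyperconvex := by
  intro r hr0 hr
  obtain ⟨z, hz⟩ := hD (fun A => r (A.map e.toEmbedding)) (by simpa using hr0) fun 𝒜 => by
    have h𝒜 := hr (𝒜.map (mapEmbedding e.toEmbedding).toEmbedding)
    rw [sup_map, sum_map] at h𝒜
    rw [← he, map_sup_eq_sup_map]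
    exact h𝒜
  refine ⟨e z, fun Y => ?_⟩
  simpa [← he, map_insert, map_map] using hz (Y.map e.symm.toEmbedding)

noncomputable section

namespace CardTightSpan

variable {β : Type*}

def cardDelta (A : Finset β) : ℝ := (#A - 1 : ℕ)

theorem cardDelta_nonneg (A : Finset β) : 0 ≤ cardDelta A := Nat.cast_nonneg _

@[simp] theorem cardDelta_empty : cardDelta (∅ : Finset β) = 0 := by simp [cardDelta]

theorem cardDelta_mono {A B : Finset β} (h : A ⊆ B) : cardDelta A ≤ cardDelta B := by
  have := card_le_card h
  unfold cardDelta; gcongr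

theorem cardDelta_le_card (A : Finset β) : cardDelta A ≤ #A := by
  unfold cardDelta; exact_mod_cast Nat.sub_le _ _

theorem card_le_cardDelta_add_one (A : Finset β) : (#A : ℝ) ≤ cardDelta A + 1 := by
  unfold cardDelta; exact_mod_cast (by omega : #A ≤ #A - 1 + 1)

theorem cardDelta_le_subtype_add (T : Set β) [DecidablePred (· ∈ T)] (X : Finset β) :
    cardDelta X ≤ cardDelta (X.subtype (· ∈ T)) + #(X.filter (· ∉ T)) := by
  have := card_filter_add_card_filter_not (s := X) (· ∈ T)
  unfold cardDelta; rw [card_subtype]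
  exact_mod_cast (by omega : #X - 1 ≤ #(X.filter (· ∈ T)) - 1 + #(X.filter (· ∉ T)))

theorem cardDelta_eq_subtype_add (T : Set β) [DecidablePred (· ∈ T)] {X : Finset β}
    (hX : (X.subtype (· ∈ T)).Nonempty) :
    cardDelta X = cardDelta (X.subtype (· ∈ T)) + #(X.filter (· ∉ T)) := by
  have := card_filter_add_card_filter_not (s := X) (· ∈ T)
  have := hX.card_pos
  unfold cardDelta; rw [card_subtype] at *
  exact_mod_cast (by omega : #X - 1 = #(X.filter (· ∈ T)) - 1 + #(X.filter (· ∉ T)))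

@[simp] theorem cardDelta_map {γ : Type*} (f : γ ↪ β) (B : Finset γ) :
    cardDelta (B.map f) = cardDelta B := by
  simp [cardDelta]

variable [DecidableEq β]

theorem cardDelta_union_le_card_add (A B : Finset β) : cardDelta (A ∪ B) ≤ #A + cardDelta B := by
  have := card_union_le A B
  unfold cardDelta; exact_mod_cast (by omega : #(A ∪ B) - 1 ≤ #A + (#B - 1))

theorem cardDelta_pair_le_one (x y : β) : cardDelta {x, y} ≤ 1 := by
  have := card_le_two (a := x) (b := y)
  unfold cardDelta; exact_mod_cast (by omega : #{x, y} - 1 ≤ 1)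

theorem cardDelta_sup_le {ι : Type*} (s : Finset ι) (g : ι → Finset β) :
    cardDelta (s.sup g) ≤ cardDelta s + ∑ i ∈ s, cardDelta (g i) := by
  rcases (s.sup g).eq_empty_or_nonempty with h | h
  · rw [h, cardDelta_empty]
    exact add_nonneg (cardDelta_nonneg _) (sum_nonneg fun i _ => cardDelta_nonneg _)
  have hs : s.Nonempty := by
    by_contra! hs; simp [hs] at h
  have hcard : (#(s.sup g) : ℝ) ≤ ∑ i ∈ s, (#(g i) : ℝ) := by
    exact_mod_cast card_sup_le_sum_card s g
  have hone := sum_le_sum fun i (_ : i ∈ s) => card_le_cardDelta_add_one (g i)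
  have hpos := card_pos.mpr h
  have hspos := card_pos.mpr hs
  rw [sum_add_distrib, sum_const, nsmul_one] at hone
  unfold cardDelta at *
  push_cast [Nat.cast_sub hpos, Nat.cast_sub hspos]
  linarith

def IsAdmissible (p : Finset β → ℝ) : Prop :=
  ∀ 𝒟 : Finset (Finset β), cardDelta (𝒟.sup id) ≤ ∑ D ∈ 𝒟, p D

/-- Encodes `p A = sup_𝒟 (δ(A ∪ ⋃ 𝒟) - ∑_{D ∈ 𝒟} p D)`; the inequality `≥` holds for every
admissible `p`. -/
def IsTight (p : Finset β → ℝ) : Prop :=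
  ∀ A : Finset β, ∀ ε > 0, ∃ 𝒟 : Finset (Finset β),
    p A - ε ≤ cardDelta (A ∪ 𝒟.sup id) - ∑ D ∈ 𝒟, p D

namespace IsAdmissible

variable {p : Finset β → ℝ} (hp : IsAdmissible p)
include hp

theorem cardDelta_le (A : Finset β) : cardDelta A ≤ p A := by
  simpa using hp {A}

theorem nonneg (A : Finset β) : 0 ≤ p A := (cardDelta_nonneg A).trans (hp.cardDelta_le A)

theorem cardDelta_sup_le {ι : Type*} (s : Finset ι) (A : ι → Finset β) :
    cardDelta (s.sup A) ≤ ∑ i ∈ s, p (A i) := by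
  calc cardDelta (s.sup A) = cardDelta ((s.image A).sup id) := by rw [sup_image]; rfl
    _ ≤ ∑ B ∈ s.image A, p B := hp _
    _ ≤ ∑ i ∈ s, p (A i) := sum_image_le_of_nonneg fun B _ => hp.nonneg B

theorem cardDelta_union_le (A : Finset β) (𝒟 : Finset (Finset β)) :
    cardDelta (A ∪ 𝒟.sup id) ≤ p A + ∑ D ∈ 𝒟, p D :=
  calc cardDelta (A ∪ 𝒟.sup id) = cardDelta ((insert A 𝒟).sup id) := by rw [sup_insert]; rfl
    _ ≤ ∑ D ∈ insert A 𝒟, p D := hp _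
    _ ≤ p A + ∑ D ∈ 𝒟, p D := sum_insert_le_of_nonneg hp.nonneg A

theorem comp_map {γ : Type*} [DecidableEq γ] (f : γ ↪ β) :
    IsAdmissible fun B : Finset γ => p (B.map f) := fun ℰ => by
  rw [← cardDelta_map f, map_sup_eq_sup_map]
  exact hp.cardDelta_sup_le _ _

end IsAdmissible

theorem IsTight.eq_of_le {p q : Finset β → ℝ} (hp : IsTight p) (hq : IsAdmissible q)
    (hle : q ≤ p) : q = p := by
  refine le_antisymm hle fun A => le_of_forall_pos_le_add fun ε hε => ?_
  obtain ⟨𝒟, h𝒟⟩ := hp A ε hε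
  have := hq.cardDelta_union_le A 𝒟
  have := sum_le_sum fun D (_ : D ∈ 𝒟) => hle D
  linarith

end CardTightSpan

open CardTightSpan in
@[ext] structure CardTightSpan (β : Type*) [DecidableEq β] where
  profile : Finset β → ℝ
  isAdmissible : IsAdmissible profile
  isTight : IsTight profile

namespace CardTightSpan

variable {β : Type*} [DecidableEq β]

instance : CoeFun (CardTightSpan β) fun _ => Finset β → ℝ := ⟨profile⟩

instance : DecidableEq (CardTightSpan β) := Classical.decEq _

theorem nonneg (p : CardTightSpan β) (A : Finset β) : 0 ≤ p A := p.isAdmissible.nonneg A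

theorem apply_empty (p : CardTightSpan β) : p ∅ = 0 := by
  refine le_antisymm (le_of_forall_pos_le_add fun ε hε => ?_) (p.nonneg ∅)
  obtain ⟨𝒟, h𝒟⟩ := p.isTight ∅ ε hε
  have := p.isAdmissible 𝒟
  rw [empty_union] at h𝒟
  linarith

/-- A finite relation `ρ` between points of the tight span and subsets of `β` is the
data `p ↦ 𝒜ₚ` of families in the supremum defining the tight span diversity. -/
def excess (ρ : Finset (CardTightSpan β × Finset β)) : ℝ :=
  cardDelta (ρ.sup Prod.snd) - ∑ x ∈ ρ, x.1 x.2

def spanDelta (F : Finset (CardTightSpan β)) : ℝ :=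
  sSup (excess '' {ρ | ∀ x ∈ ρ, x.1 ∈ F})

theorem excess_le_cardDelta {F : Finset (CardTightSpan β)} {ρ : Finset (CardTightSpan β × Finset β)}
    (hρ : ∀ x ∈ ρ, x.1 ∈ F) : excess ρ ≤ cardDelta F := by
  set P := ρ.image Prod.fst
  have hsup : ρ.sup Prod.snd = P.sup fun p => (ρ.filter (·.1 = p)).sup Prod.snd := by
    rw [← sup_biUnion, biUnion_filter_eq_of_maps_to fun x hx => mem_image_of_mem _ hx]
  have hfiber (p : CardTightSpan β) :
      cardDelta ((ρ.filter (·.1 = p)).sup Prod.snd) ≤ ∑ x ∈ ρ.filter (·.1 = p), x.1 x.2 :=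
    (p.isAdmissible.cardDelta_sup_le _ _).trans_eq <|
      sum_congr rfl fun x hx => by rw [(mem_filter.mp hx).2]
  have hP : cardDelta P ≤ cardDelta F :=
    cardDelta_mono fun p hp => by obtain ⟨x, hx, rfl⟩ := mem_image.mp hp; exact hρ x hx
  have := cardDelta_sup_le P fun p => (ρ.filter (·.1 = p)).sup Prod.snd
  rw [← hsup] at this
  have := sum_le_sum fun p (_ : p ∈ P) => hfiber p
  rw [sum_fiberwise_of_maps_to fun x hx => mem_image_of_mem _ hx] at this
  unfold excess
  linarith

theorem bddAbove_excess (F : Finset (CardTightSpan β)) :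
    BddAbove (excess '' {ρ | ∀ x ∈ ρ, x.1 ∈ F}) :=
  ⟨cardDelta F, by rintro _ ⟨ρ, hρ, rfl⟩; exact excess_le_cardDelta hρ⟩

theorem excess_le_spanDelta {F : Finset (CardTightSpan β)} {ρ : Finset (CardTightSpan β × Finset β)}
    (hρ : ∀ x ∈ ρ, x.1 ∈ F) : excess ρ ≤ spanDelta F :=
  le_csSup (bddAbove_excess F) ⟨ρ, hρ, rfl⟩

theorem spanDelta_le {F : Finset (CardTightSpan β)} {c : ℝ}
    (h : ∀ ρ : Finset (CardTightSpan β × Finset β), (∀ x ∈ ρ, x.1 ∈ F) → excess ρ ≤ c) :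
    spanDelta F ≤ c :=
  csSup_le ⟨_, ∅, by simp, rfl⟩ <| by rintro _ ⟨ρ, hρ, rfl⟩; exact h ρ hρ

theorem spanDelta_nonneg (F : Finset (CardTightSpan β)) : 0 ≤ spanDelta F := by
  simpa [excess] using excess_le_spanDelta (F := F) (ρ := ∅) (by simp)

theorem spanDelta_le_cardDelta (F : Finset (CardTightSpan β)) : spanDelta F ≤ cardDelta F :=
  spanDelta_le fun _ => excess_le_cardDelta

theorem le_excess_union (ρ σ : Finset (CardTightSpan β × Finset β)) :
    cardDelta (ρ.sup Prod.snd ∪ σ.sup Prod.snd) - (∑ x ∈ ρ, x.1 x.2 + ∑ x ∈ σ, x.1 x.2) ≤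
      excess (ρ ∪ σ) := by
  have := sum_union_le_of_nonneg (s := ρ) (t := σ) fun x => x.1.nonneg x.2
  rw [excess, sup_union]
  exact sub_le_sub_left this _

theorem excess_eq_filter_add (ρ : Finset (CardTightSpan β × Finset β))
    (P : CardTightSpan β → Prop) [DecidablePred P] :
    excess ρ = cardDelta ((ρ.filter (P ·.1)).sup Prod.snd ∪ (ρ.filter (¬P ·.1)).sup Prod.snd) -
      (∑ x ∈ ρ.filter (P ·.1), x.1 x.2 + ∑ x ∈ ρ.filter (¬P ·.1), x.1 x.2) := by
  rw [excess, ← sup_eq_union, ← sup_union, filter_union_filter_not_eq,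
    sum_filter_add_sum_filter_not]

theorem forall_fst_mem_union_singleton_product {F : Finset (CardTightSpan β)}
    {ρ : Finset (CardTightSpan β × Finset β)} (hρ : ∀ x ∈ ρ, x.1 ∈ F) {g : CardTightSpan β}
    (hg : g ∈ F) (𝒟 : Finset (Finset β)) : ∀ x ∈ ρ ∪ {g} ×ˢ 𝒟, x.1 ∈ F := fun x hx => by
  rcases mem_union.mp hx with hx | hx
  · exact hρ x hx
  · rw [mem_singleton.mp (mem_product.mp hx).1]; exact hg

@[simp] theorem sup_snd_singleton_product (p : CardTightSpan β) (𝒟 : Finset (Finset β)) :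
    ({p} ×ˢ 𝒟).sup Prod.snd = 𝒟.sup id := by
  rw [sup_product_left, sup_singleton]; rfl

@[simp] theorem sum_singleton_product (p : CardTightSpan β) (𝒟 : Finset (Finset β)) :
    ∑ x ∈ {p} ×ˢ 𝒟, x.1 x.2 = ∑ D ∈ 𝒟, p D := by
  rw [sum_product, sum_singleton]

theorem eq_of_spanDelta_nonpos {F : Finset (CardTightSpan β)} (hF : spanDelta F ≤ 0)
    {p q : CardTightSpan β} (hp : p ∈ F) (hq : q ∈ F) : p = q := by
  have hmin : IsAdmissible fun A => min (p A) (q A) := fun 𝒞 => by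
    set 𝒜 := 𝒞.filter fun A => p A ≤ q A
    set ℬ := 𝒞.filter fun A => ¬p A ≤ q A
    have hsup : (({p} ×ˢ 𝒜).sup Prod.snd ∪ ({q} ×ˢ ℬ).sup Prod.snd) = 𝒞.sup id := by
      rw [sup_snd_singleton_product, sup_snd_singleton_product, ← sup_eq_union, ← sup_union,
        filter_union_filter_not_eq]
    have hsum : ∑ x ∈ {p} ×ˢ 𝒜, x.1 x.2 + ∑ x ∈ {q} ×ˢ ℬ, x.1 x.2 =
        ∑ A ∈ 𝒞, min (p A) (q A) := by
      rw [sum_singleton_product, sum_singleton_product, ← sum_filter_add_sum_filter_not 𝒞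
        (fun A => p A ≤ q A)]
      congr 1 <;> refine sum_congr rfl fun A hA => ?_
      · exact (min_eq_left (mem_filter.mp hA).2).symm
      · exact (min_eq_right (not_le.mp (mem_filter.mp hA).2).le).symm
    have := le_excess_union ({p} ×ˢ 𝒜) ({q} ×ˢ ℬ)
    have := excess_le_spanDelta <| forall_fst_mem_union_singleton_product (ρ := {p} ×ˢ 𝒜)
      (fun x hx => mem_singleton.mp (mem_product.mp hx).1 ▸ hp) hq ℬ
    rw [hsup, hsum] at *
    linarith
  have hp' := p.isTight.eq_of_le hmin fun A => min_le_left _ _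
  have hq' := q.isTight.eq_of_le hmin fun A => min_le_right _ _
  exact CardTightSpan.ext (hp'.symm.trans hq')

theorem spanDelta_eq_zero_iff (F : Finset (CardTightSpan β)) : spanDelta F = 0 ↔ #F ≤ 1 := by
  refine ⟨fun h => ?_, fun h => le_antisymm ?_ (spanDelta_nonneg F)⟩
  · by_contra! hF
    obtain ⟨p, hp, q, hq, hpq⟩ := one_lt_card.mp hF
    exact hpq (eq_of_spanDelta_nonpos h.le hp hq)
  · calc spanDelta F ≤ cardDelta F := spanDelta_le_cardDelta F
      _ = 0 := by simp [cardDelta, Nat.sub_eq_zero_of_le h]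

/-- Split a relation on `A ∪ C` into its parts `ρA` over `A` and `ρC` outside `A`, and let `E` be
the part of `β` covered by `ρC`. For `g ∈ B`, tightness of `g` at `E` gives `𝒟` such that
`ρA ∪ {(g, E)}` on `A ∪ B` and `ρC ∪ {g} × 𝒟` on `B ∪ C` have excesses adding up to at least
`excess ρ - ε`. -/
theorem spanDelta_triangle (A B C : Finset (CardTightSpan β)) (hB : B.Nonempty) :
    spanDelta (A ∪ C) ≤ spanDelta (A ∪ B) + spanDelta (B ∪ C) := by
  obtain ⟨g, hg⟩ := hB
  refine spanDelta_le fun ρ hρ => le_of_forall_pos_le_add fun ε hε => ?_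
  set ρA := ρ.filter (·.1 ∈ A)
  set ρC := ρ.filter (·.1 ∉ A)
  obtain ⟨𝒟, h𝒟⟩ := g.isTight (ρC.sup Prod.snd) ε hε
  have hAB := excess_le_spanDelta <| forall_fst_mem_union_singleton_product
    (ρ := ρA) (fun x hx => mem_union_left _ (mem_filter.mp hx).2) (mem_union_right A hg)
    {ρC.sup Prod.snd}
  have hBC := excess_le_spanDelta <| forall_fst_mem_union_singleton_product
    (ρ := ρC) (fun x hx => mem_union_right _ <|
      (mem_union.mp (hρ x (mem_filter.mp hx).1)).resolve_left (mem_filter.mp hx).2)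
    (mem_union_left C hg) 𝒟
  have h₁ := le_excess_union ρA ({g} ×ˢ {ρC.sup Prod.snd})
  have h₂ := le_excess_union ρC ({g} ×ˢ 𝒟)
  simp only [sup_snd_singleton_product, sum_singleton_product, sup_singleton, sum_singleton, id]
    at h₁ h₂
  rw [excess_eq_filter_add ρ (· ∈ A)]
  linarith

theorem spanDelta_pair_le_one (p q : CardTightSpan β) : spanDelta {p, q} ≤ 1 :=
  (spanDelta_le_cardDelta _).trans (cardDelta_pair_le_one p q)

variable (β) in
def diversity : Diversity (CardTightSpan β) where
  delta := spanDelta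
  nonneg := spanDelta_nonneg
  eq_zero_iff := spanDelta_eq_zero_iff
  triangle := spanDelta_triangle

/-- `h` is a candidate profile of a point `z` with `δ_T({z} ∪ F) ≤ R F`: adjoining `z` with
profile `h` keeps every family `ℬ` of subsets of `β`, together with relations `ρ` on `⋃ 𝔉`
priced through `R`, admissible. -/
def IsCompatible (R : Finset (CardTightSpan β) → ℝ) (h : Finset β → ℝ) : Prop :=
  ∀ (ℬ : Finset (Finset β)) (𝔉 : Finset (Finset (CardTightSpan β)))
    (ρ : Finset (CardTightSpan β × Finset β)), (∀ x ∈ ρ, x.1 ∈ 𝔉.sup id) →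
    cardDelta (ℬ.sup id ∪ ρ.sup Prod.snd) ≤ ∑ A ∈ ℬ, h A + (∑ F ∈ 𝔉, R F + ∑ x ∈ ρ, x.1 x.2)

theorem IsCompatible.isAdmissible {R : Finset (CardTightSpan β) → ℝ} {h : Finset β → ℝ}
    (hh : IsCompatible R h) : IsAdmissible h := fun 𝒟 => by
  simpa using hh 𝒟 ∅ ∅ (by simp)

/-- The pointwise infimum of a chain is compatible, since each constraint involves only
finitely many values of the profile. -/
theorem exists_isCompatible_le_of_isChain {R : Finset (CardTightSpan β) → ℝ}
    {c : Set (Finset β → ℝ)} (hc : IsChain (· ≤ ·) c) (hne : c.Nonempty)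
    (hcompat : ∀ f ∈ c, IsCompatible R f) : ∃ g, IsCompatible R g ∧ ∀ f ∈ c, g ≤ f := by
  have := hne.to_subtype
  set g : Finset β → ℝ := fun A => ⨅ f : c, f.1 A
  have hbdd (A : Finset β) : BddBelow (Set.range fun f : c => f.1 A) :=
    ⟨0, by rintro _ ⟨f, rfl⟩; exact (hcompat f f.2).isAdmissible.nonneg A⟩
  have hg (A : Finset β) (δ : ℝ) (hδ : δ > 0) : ∃ f ∈ c, f A < g A + δ := by
    obtain ⟨f, hf⟩ := exists_lt_of_ciInf_lt (lt_add_of_pos_right (g A) hδ)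
    exact ⟨f, f.2, hf⟩
  refine ⟨g, fun ℬ 𝔉 ρ hρ => le_of_forall_pos_le_add fun ε hε => ?_,
    fun f hf A => ciInf_le (hbdd A) ⟨f, hf⟩⟩
  have hδ : 0 < ε / (#ℬ + 1) := by positivity
  obtain ⟨f, hf, hfg⟩ := hc.exists_forall_lt_add hne hg ℬ hδ
  have hsum : ∑ A ∈ ℬ, f A ≤ ∑ A ∈ ℬ, g A + ε := by
    calc ∑ A ∈ ℬ, f A ≤ ∑ A ∈ ℬ, (g A + ε / (#ℬ + 1)) := sum_le_sum fun A hA => (hfg A hA).le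
      _ = ∑ A ∈ ℬ, g A + #ℬ / (#ℬ + 1) * ε := by
        rw [sum_add_distrib, sum_const, nsmul_eq_mul]; ring
      _ ≤ ∑ A ∈ ℬ, g A + ε := by
        gcongr
        exact mul_le_of_le_one_left hε.le (div_le_one_of_le₀ (by linarith) (by positivity))
  have := hcompat f hf ℬ 𝔉 ρ hρ
  linarith

section Hyperconvex

variable {R : Finset (CardTightSpan β) → ℝ}
  (hR : ∀ 𝒢 : Finset (Finset (CardTightSpan β)), spanDelta (𝒢.sup id) ≤ ∑ F ∈ 𝒢, R F)
include hR

theorem nonneg_of_forall_spanDelta_le (F : Finset (CardTightSpan β)) : 0 ≤ R F :=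
  (spanDelta_nonneg F).trans (by simpa using hR {F})

theorem cardDelta_sup_snd_le {𝔉 : Finset (Finset (CardTightSpan β))}
    {ρ : Finset (CardTightSpan β × Finset β)} (hρ : ∀ x ∈ ρ, x.1 ∈ 𝔉.sup id) :
    cardDelta (ρ.sup Prod.snd) ≤ ∑ F ∈ 𝔉, R F + ∑ x ∈ ρ, x.1 x.2 := by
  have := (excess_le_spanDelta hρ).trans (hR 𝔉)
  rw [excess] at this
  linarith

theorem isCompatible_card : IsCompatible R fun A => (#A : ℝ) := fun ℬ 𝔉 ρ hρ => by
  have hℬ : (#(ℬ.sup id) : ℝ) ≤ ∑ A ∈ ℬ, (#A : ℝ) := by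
    exact_mod_cast card_sup_le_sum_card ℬ id
  have := cardDelta_union_le_card_add (ℬ.sup id) (ρ.sup Prod.snd)
  have := cardDelta_sup_snd_le hR hρ
  linarith

/-- Otherwise lowering `h` at `ρ.sup Prod.snd` to this bound would keep it compatible. -/
theorem apply_sup_snd_le_of_minimal {h : Finset β → ℝ} (hmin : Minimal (IsCompatible R) h)
    {𝔉 : Finset (Finset (CardTightSpan β))} {ρ : Finset (CardTightSpan β × Finset β)}
    (hρ : ∀ x ∈ ρ, x.1 ∈ 𝔉.sup id) : h (ρ.sup Prod.snd) ≤ ∑ F ∈ 𝔉, R F + ∑ x ∈ ρ, x.1 x.2 := by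
  set W := ρ.sup Prod.snd
  by_contra! hlt
  have hcompat : IsCompatible R (Function.update h W (∑ F ∈ 𝔉, R F + ∑ x ∈ ρ, x.1 x.2)) := by
    intro ℬ 𝔉' ρ' hρ'
    by_cases hW : W ∈ ℬ
    · rw [sum_update_of_mem hW]
      have hmerge := hmin.prop (ℬ \ {W}) (𝔉 ∪ 𝔉') (ρ ∪ ρ') fun x hx => by
        rw [sup_union]
        rcases mem_union.mp hx with hx | hx
        · exact mem_union_left _ (hρ x hx)
        · exact mem_union_right _ (hρ' x hx)
      have hsub : ℬ.sup id ∪ ρ'.sup Prod.snd ⊆ (ℬ \ {W}).sup id ∪ (ρ ∪ ρ').sup Prod.snd := by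
        rw [sup_id_eq_union_sdiff hW, sup_union]
        intro a; simp only [mem_union, sup_eq_union]; tauto
      have := cardDelta_mono hsub
      have := sum_union_le_of_nonneg (s := 𝔉) (t := 𝔉') (nonneg_of_forall_spanDelta_le hR)
      have := sum_union_le_of_nonneg (s := ρ) (t := ρ') fun x => x.1.nonneg x.2
      linarith
    · rw [sum_update_of_notMem hW]
      exact hmin.prop ℬ 𝔉' ρ' hρ'
  have := hmin.le_of_le hcompat (update_le_self_iff.mpr hlt.le) W
  simp only [Function.update_self] at this
  linarith

/-- If tightness failed at `A₀`, lowering `h A₀` by `ε` would keep `h` compatible: a family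
containing `A₀` absorbs `ρ.sup Prod.snd` at the cost bounded by `apply_sup_snd_le_of_minimal`. -/
theorem isTight_of_minimal {h : Finset β → ℝ} (hmin : Minimal (IsCompatible R) h) : IsTight h := by
  intro A₀ ε hε
  by_contra! hcon
  have hcompat : IsCompatible R (Function.update h A₀ (h A₀ - ε)) := by
    intro ℬ 𝔉 ρ hρ
    by_cases hA₀ : A₀ ∈ ℬ
    · rw [sum_update_of_mem hA₀]
      set W := ρ.sup Prod.snd
      have hW := apply_sup_snd_le_of_minimal hR hmin hρ
      have hfar := hcon (insert W (ℬ \ {A₀}))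
      have hsub : ℬ.sup id ∪ W ⊆ A₀ ∪ (insert W (ℬ \ {A₀})).sup id := by
        rw [sup_id_eq_union_sdiff hA₀, sup_insert]
        intro a; simp only [mem_union, sup_eq_union, id]; tauto
      have := cardDelta_mono hsub
      have := sum_insert_le_of_nonneg hmin.prop.isAdmissible.nonneg W (s := ℬ \ {A₀})
      linarith
    · rw [sum_update_of_notMem hA₀]
      exact hmin.prop ℬ 𝔉 ρ hρ
  have := hmin.le_of_le hcompat (update_le_self_iff.mpr (by linarith)) A₀
  simp only [Function.update_self] at this
  linarith

theorem exists_minimal_isCompatible : ∃ h, Minimal (IsCompatible R) h := by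
  obtain ⟨m, hm⟩ := zorn_le₀ (α := (Finset β → ℝ)ᵒᵈ) {f | IsCompatible R (OrderDual.ofDual f)}
    fun c hcs hc => by
      rcases c.eq_empty_or_nonempty with rfl | hne
      · exact ⟨OrderDual.toDual fun A => (#A : ℝ), isCompatible_card hR, by simp⟩
      · obtain ⟨g, hg, hgc⟩ := exists_isCompatible_le_of_isChain
          (c := OrderDual.toDual ⁻¹' c) (fun x hx y hy hxy => (hc hx hy hxy).symm) hne hcs
        exact ⟨OrderDual.toDual g, hg, hgc⟩
  exact ⟨OrderDual.ofDual m, maximal_toDual.mp hm⟩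

end Hyperconvex

/-- A minimal compatible profile `h` is a point `z` of the tight span, and compatibility with
`ℬ = 𝒜_z` and `𝔉 = {Y}` is exactly `δ_T({z} ∪ Y) ≤ R Y`. -/
theorem hyperconvex : (diversity β).Hyperconvex := by
  intro R _ hR
  obtain ⟨h, hmin⟩ := exists_minimal_isCompatible hR
  let z : CardTightSpan β := ⟨h, hmin.prop.isAdmissible, isTight_of_minimal hR hmin⟩
  refine ⟨z, fun Y => spanDelta_le fun ρ hρ => ?_⟩
  set ρz := ρ.filter (·.1 = z)
  set ρY := ρ.filter (¬·.1 = z)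
  have hρY : ∀ x ∈ ρY, x.1 ∈ ({Y} : Finset _).sup id := fun x hx => by
    obtain ⟨hxρ, hxz⟩ := mem_filter.mp hx
    simpa [hxz] using hρ x hxρ
  have hcompat := hmin.prop (ρz.image Prod.snd) {Y} ρY hρY
  have hz : ∑ A ∈ ρz.image Prod.snd, h A ≤ ∑ x ∈ ρz, x.1 x.2 :=
    (sum_image_le_of_nonneg fun A _ => z.nonneg A).trans_eq <|
      sum_congr rfl fun x hx => by rw [(mem_filter.mp hx).2]
  rw [sup_image, Function.id_comp, sum_singleton] at hcompat
  rw [excess_eq_filter_add ρ (· = z)]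
  linarith

instance : Nonempty (CardTightSpan β) := by
  obtain ⟨z, -⟩ := hyperconvex (β := β) (fun F => #F) (by simp) fun 𝒢 => by
    calc spanDelta (𝒢.sup id) ≤ #(𝒢.sup id) :=
          (spanDelta_le_cardDelta _).trans (cardDelta_le_card _)
      _ ≤ ∑ F ∈ 𝒢, (#F : ℝ) := by exact_mod_cast card_sup_le_sum_card 𝒢 id
  exact ⟨z⟩

section Split

variable (T : Set β) [DecidablePred (· ∈ T)]

def splitSet : Set (CardTightSpan β) :=
  {p | ∀ A, p A = p (A.filter (· ∈ T)) + #(A.filter (· ∉ T))}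

def extendProfile (q : Finset T → ℝ) (A : Finset β) : ℝ :=
  q (A.subtype (· ∈ T)) + #(A.filter (· ∉ T))

theorem IsAdmissible.extendProfile {q : Finset T → ℝ} (hq : IsAdmissible q) :
    IsAdmissible (extendProfile T q) := fun 𝒜 => by
  have hT : cardDelta ((𝒜.sup id).subtype (· ∈ T)) ≤ ∑ A ∈ 𝒜, q (A.subtype (· ∈ T)) := by
    rw [subtype_sup]; exact hq.cardDelta_sup_le _ _
  have hTc : (#((𝒜.sup id).filter (· ∉ T)) : ℝ) ≤ ∑ A ∈ 𝒜, (#(A.filter (· ∉ T)) : ℝ) := by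
    rw [filter_sup]; exact_mod_cast card_sup_le_sum_card _ _
  have := cardDelta_le_subtype_add T (𝒜.sup id)
  simp only [CardTightSpan.extendProfile, sum_add_distrib]
  linarith

omit [DecidableEq β] in
@[simp] theorem extendProfile_map_subtype (q : Finset T → ℝ) (B : Finset T) :
    extendProfile T q (B.map (.subtype _)) = q B := by
  simp [extendProfile]

theorem cardDelta_union_sup_map_sub_sum (q : Finset T → ℝ) (A : Finset β)
    (ℰ : Finset (Finset T)) (hne : (A.subtype (· ∈ T) ∪ ℰ.sup id).Nonempty) :
    cardDelta (A ∪ (ℰ.map (mapEmbedding (.subtype _)).toEmbedding).sup id) -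
        ∑ D ∈ ℰ.map (mapEmbedding (.subtype _)).toEmbedding, extendProfile T q D =
      #(A.filter (· ∉ T)) + (cardDelta (A.subtype (· ∈ T) ∪ ℰ.sup id) - ∑ E ∈ ℰ, q E) := by
  have hsup : (ℰ.map (mapEmbedding (.subtype _)).toEmbedding).sup id =
      (ℰ.sup id).map (.subtype _) := by
    rw [sup_map, map_sup_eq_sup_map]; rfl
  have hsplit : (A ∪ (ℰ.sup id).map (.subtype (· ∈ T))).subtype (· ∈ T) =
      A.subtype (· ∈ T) ∪ ℰ.sup id := by
    rw [subtype_union, subtype_map_subtype]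
  have hout : (A ∪ (ℰ.sup id).map (.subtype (· ∈ T))).filter (· ∉ T) = A.filter (· ∉ T) := by
    rw [filter_union, filter_not_map_subtype, union_empty]
  rw [hsup, cardDelta_eq_subtype_add T (hsplit ▸ hne), hsplit, hout, sum_map]
  simp only [RelEmbedding.coe_toEmbedding, mapEmbedding_apply, extendProfile_map_subtype]
  ring

/-- If `A` misses `T`, the family witnessing tightness at a singleton `{t} ⊆ T` serves. -/
theorem IsTight.extendProfile (hT : T.Nonempty) (q : CardTightSpan T) :
    IsTight (extendProfile T q) := by
  intro A ε hε
  rcases (A.subtype (· ∈ T)).eq_empty_or_nonempty with hA | hA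
  · obtain ⟨t, ht⟩ := hT
    obtain ⟨ℰ, hℰ⟩ := q.isTight {⟨t, ht⟩} ε hε
    refine ⟨(insert {⟨t, ht⟩} ℰ).map (mapEmbedding (.subtype _)).toEmbedding, ?_⟩
    rw [cardDelta_union_sup_map_sub_sum _ _ _ _ (by simp [hA, sup_insert])]
    have := sum_insert_le_of_nonneg q.isAdmissible.nonneg {⟨t, ht⟩} (s := ℰ)
    simp only [CardTightSpan.extendProfile, hA, q.apply_empty, sup_insert, id, empty_union,
      sup_eq_union] at *
    linarith
  · obtain ⟨ℰ, hℰ⟩ := q.isTight (A.subtype (· ∈ T)) ε hε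
    refine ⟨ℰ.map (mapEmbedding (.subtype _)).toEmbedding, ?_⟩
    rw [cardDelta_union_sup_map_sub_sum _ _ _ _ (hA.mono subset_union_left)]
    simp only [CardTightSpan.extendProfile]
    linarith

def extend (hT : T.Nonempty) (q : CardTightSpan T) : CardTightSpan β :=
  ⟨extendProfile T q, q.isAdmissible.extendProfile T, IsTight.extendProfile T hT q⟩

theorem extend_mem_splitSet (hT : T.Nonempty) (q : CardTightSpan T) : extend T hT q ∈ splitSet T :=
  fun A => by
    have : (A.filter (· ∈ T)).subtype (· ∈ T) = A.subtype (· ∈ T) := by ext; simp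
    simp [extend, extendProfile, this, filter_filter]

theorem extend_injective (hT : T.Nonempty) : Function.Injective (extend T hT) := fun q q' h => by
  ext B
  simpa [extend] using congrArg (fun p : CardTightSpan β => p (B.map (.subtype _))) h

theorem isTight_restrict {p : CardTightSpan β} (hp : p ∈ splitSet T) :
    IsTight fun B : Finset T => p (B.map (.subtype _)) := by
  intro B ε hε
  obtain ⟨𝒟, h𝒟⟩ := p.isTight (B.map (.subtype _)) ε hε
  refine ⟨𝒟.image (·.subtype (· ∈ T)), ?_⟩
  have hsplit := cardDelta_le_subtype_add T (B.map (.subtype _) ∪ 𝒟.sup id)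
  rw [subtype_union, subtype_map_subtype, subtype_sup, filter_union, filter_not_map_subtype,
    empty_union, filter_sup] at hsplit
  have hout : (#(𝒟.sup fun D => D.filter (· ∉ T)) : ℝ) ≤ ∑ D ∈ 𝒟, (#(D.filter (· ∉ T)) : ℝ) := by
    exact_mod_cast card_sup_le_sum_card _ _
  have hsum : ∑ E ∈ 𝒟.image (·.subtype (· ∈ T)), p (E.map (.subtype _)) ≤
      ∑ D ∈ 𝒟, (p D - #(D.filter (· ∉ T))) :=
    (sum_image_le_of_nonneg fun _ _ => p.nonneg _).trans_eq <|
      sum_congr rfl fun D _ => by rw [subtype_map, hp D]; ring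
  rw [sum_sub_distrib] at hsum
  simp only [id] at hsplit
  rw [sup_image, Function.id_comp]
  beta_reduce
  linarith

theorem spanDelta_le_spanDelta_image_extend (hT : T.Nonempty) (G : Finset (CardTightSpan T)) :
    spanDelta G ≤ spanDelta (G.image (extend T hT)) := spanDelta_le fun σ hσ => by
  refine le_trans ?_ (excess_le_spanDelta (ρ := σ.image fun y => (extend T hT y.1,
    y.2.map (.subtype _))) fun x hx => ?_)
  · have hsum : ∑ x ∈ σ.image (fun y => (extend T hT y.1, y.2.map (.subtype _))), x.1 x.2 ≤
        ∑ y ∈ σ, y.1 y.2 :=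
      (sum_image_le_of_nonneg fun x _ => x.1.nonneg x.2).trans_eq <|
        sum_congr rfl fun y _ => extendProfile_map_subtype T _ _
    rw [excess, excess, sup_image, Function.comp_def, ← map_sup_eq_sup_map, cardDelta_map]
    linarith
  · obtain ⟨y, hy, rfl⟩ := mem_image.mp hx
    exact mem_image_of_mem _ (hσ y hy)

theorem spanDelta_image_extend_le (hT : T.Nonempty) (G : Finset (CardTightSpan T)) :
    spanDelta (G.image (extend T hT)) ≤ spanDelta G := spanDelta_le fun ρ hρ => by
  let r := Function.invFun (extend T hT)
  have hr (x) (hx : x ∈ ρ) : extend T hT (r x.1) = x.1 ∧ r x.1 ∈ G := by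
    obtain ⟨q, hq, hqx⟩ := mem_image.mp (hρ x hx)
    refine ⟨Function.invFun_eq ⟨q, hqx⟩, ?_⟩
    rwa [← hqx, show r (extend T hT q) = q from
      Function.leftInverse_invFun (extend_injective T hT) q]
  set σ := ρ.image fun x => (r x.1, x.2.subtype (· ∈ T))
  refine le_trans ?_ (excess_le_spanDelta (ρ := σ) fun y hy => ?_)
  · have hsplit := cardDelta_le_subtype_add T (ρ.sup Prod.snd)
    have hout : (#((ρ.sup Prod.snd).filter (· ∉ T)) : ℝ) ≤
        ∑ x ∈ ρ, (#(x.2.filter (· ∉ T)) : ℝ) := by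
      rw [filter_sup]; exact_mod_cast card_sup_le_sum_card _ _
    have hsum : ∑ y ∈ σ, y.1 y.2 ≤ ∑ x ∈ ρ, (x.1 x.2 - #(x.2.filter (· ∉ T))) :=
      (sum_image_le_of_nonneg fun y _ => y.1.nonneg y.2).trans_eq <| sum_congr rfl fun x hx => by
        conv_rhs => rw [← (hr x hx).1]
        simp [extend, extendProfile]
    rw [sum_sub_distrib] at hsum
    rw [excess, excess, sup_image, Function.comp_def, ← subtype_sup]
    linarith
  · obtain ⟨x, hx, rfl⟩ := mem_image.mp hy
    exact (hr x hx).2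

def splitEquiv (hT : T.Nonempty) : CardTightSpan T ≃ splitSet T :=
  Equiv.ofBijective (fun q => ⟨extend T hT q, extend_mem_splitSet T hT q⟩) <| by
    refine ⟨fun q q' h => extend_injective T hT (congrArg Subtype.val h), fun ⟨p, hp⟩ => ?_⟩
    refine ⟨⟨_, p.isAdmissible.comp_map (.subtype _), isTight_restrict T hp⟩, ?_⟩
    ext A
    simp [extend, extendProfile, subtype_map, ← hp A]

theorem hyperconvex_restrict_splitSet (hT : T.Nonempty) :
    ((diversity β).restrict (splitSet T)).Hyperconvex :=
  hyperconvex.of_equiv (splitEquiv T hT) fun A => by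
    change spanDelta ((A.map _).image Subtype.val) = spanDelta A
    rw [map_eq_image, image_image]
    exact le_antisymm (spanDelta_image_extend_le T hT A)
      (spanDelta_le_spanDelta_image_extend T hT A)

end Split

theorem splitSet_anti {T T' : Set β} [DecidablePred (· ∈ T)] [DecidablePred (· ∈ T')]
    (h : T' ⊆ T) : splitSet T' ⊆ splitSet T := fun p hp A => by
  have hin : (A.filter (· ∈ T)).filter (· ∈ T') = A.filter (· ∈ T') := by
    rw [filter_filter]; exact filter_congr fun x _ => ⟨And.right, fun hx => ⟨h hx, hx⟩⟩
  have hout : ((A.filter (· ∉ T')).filter (· ∉ T)) = A.filter (· ∉ T) := by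
    rw [filter_filter]; exact filter_congr fun x _ => ⟨And.right, fun hx => ⟨mt (@h x) hx, hx⟩⟩
  have hcard := card_filter_add_card_filter_not (s := A.filter (· ∉ T')) (· ∈ T)
  rw [hout, filter_comm] at hcard
  have := hp (A.filter (· ∈ T))
  rw [hin, hp A, ← hcard] at *
  push_cast
  linarith

theorem not_isTight_card [Nonempty β] : ¬IsTight fun A : Finset β => (#A : ℝ) := fun h => by
  obtain ⟨b⟩ := ‹Nonempty β›
  obtain ⟨𝒟, h𝒟⟩ := h {b} (1 / 2) (by norm_num)
  have := cardDelta_union_le_card_add (𝒟.sup id) {b}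
  have : (#(𝒟.sup id) : ℝ) ≤ ∑ D ∈ 𝒟, (#D : ℝ) := by exact_mod_cast card_sup_le_sum_card 𝒟 id
  rw [union_comm] at h𝒟
  simp [cardDelta] at *
  linarith

theorem iInter_splitSet_Ici : ⋂ n : ℕ, splitSet (Set.Ici n) = ∅ := by
  refine Set.eq_empty_of_forall_notMem fun p hp => not_isTight_card (β := ℕ) ?_
  convert p.isTight using 1
  funext A
  have hA := Set.mem_iInter.mp hp (A.sup id + 1) A
  have hlt : ∀ k ∈ A, k < A.sup id + 1 := fun k hk => Nat.lt_succ_of_le (le_sup (f := id) hk)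
  rw [filter_false_of_mem fun k hk => by simpa using hlt k hk,
    filter_true_of_mem fun k hk => by simpa using hlt k hk, p.apply_empty, zero_add] at hA
  exact hA.symm

end CardTightSpan

end

/-- There exist a hyperconvex diversity `(X, δ)` whose induced metric
space is bounded and a decreasing sequence `(S n)` of subsets of `X` such that each
restriction `(S n, δ)` is a hyperconvex diversity while `⋂ n, S n = ∅`. -/
theorem exists_decreasing_hyperconvex_restrictions_empty_intersection :
    ∃ (X : Type) (_ : DecidableEq X) (D : Diversity X) (S : ℕ → Set X),
      D.Hyperconvex ∧
      (∃ M : ℝ, ∀ x y : X, D.delta {x, y} ≤ M) ∧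
      (∀ n : ℕ, S (n + 1) ⊆ S n) ∧
      (∀ n : ℕ, (D.restrict (S n)).Hyperconvex) ∧
      (⋂ n : ℕ, S n) = ∅ :=
  ⟨CardTightSpan ℕ, inferInstance, CardTightSpan.diversity ℕ,
    fun n => CardTightSpan.splitSet (Set.Ici n), CardTightSpan.hyperconvex,
    ⟨1, CardTightSpan.spanDelta_pair_le_one⟩,
    fun n => CardTightSpan.splitSet_anti (Set.Ici_subset_Ici.mpr n.le_succ),
    fun _ => CardTightSpan.hyperconvex_restrict_splitSet _ Set.nonempty_Ici,
    CardTightSpan.iInter_splitSet_Ici⟩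
end

section
/- There exist a hyperconvex diversity (X, δ) with bounded induced metric space (X, d) and a mapping T : X → X, nonexpansive with respect to d, such that there is no nonempty finite subset F ⊆ X with T(F) = F (where T(F) denotes the image of F under T). In particular, T has no fixed point with respect to the diversity. -/
/-!
The points are the *tight capacities* on `ℕ`: functions `x` on finite subsets with `x ∅ = 0`,
`x ≥ 0` and `∑ x D ≤ 1` over every disjoint family, which are maximal with these properties.
Then `δ F = max 0 (sup_a ∑_{x ∈ F} x (a x) - 1)`, the supremum taken over assignments of pairwise
disjoint sets `a x`; for `r` as in hyperconvexity, Zorn's lemma yields a maximal function subject to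
the constraints that `δ (insert z Y) ≤ r Y` imposes on `z`, and maximality makes it tight.
The shift `n ↦ n + 1` induces `T x = x ∘ preimage`, which does not increase `δ`. If `T` permuted a
nonempty finite `F`, then `∑_{x ∈ F} x A` would not change when `A` is shifted down, so it would
vanish, whereas every tight capacity takes values close to `1`.
-/

open Finset

noncomputable section

lemma sum_insert_of_forall_disjoint {α M : Type*} [DecidableEq α] [AddCommMonoid M]
    {q : Finset α → M} (hq : q ∅ = 0) {A : Finset α} {𝒟 : Finset (Finset α)}
    (hA : ∀ D ∈ 𝒟, Disjoint A D) : ∑ D ∈ insert A 𝒟, q D = q A + ∑ D ∈ 𝒟, q D := by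
  by_cases hA𝒟 : A ∈ 𝒟
  · obtain rfl : A = ∅ := disjoint_self_iff_empty A |>.mp (hA A hA𝒟)
    rw [insert_eq_of_mem hA𝒟, hq, zero_add]
  · exact sum_insert hA𝒟

lemma pairwiseDisjoint_insert_of_forall_disjoint {α : Type*} [DecidableEq α] {A : Finset α}
    {𝒟 : Finset (Finset α)} (h𝒟 : (𝒟 : Set (Finset α)).PairwiseDisjoint id)
    (hA : ∀ D ∈ 𝒟, Disjoint A D) :
    ((insert A 𝒟 : Finset (Finset α)) : Set (Finset α)).PairwiseDisjoint id := by
  rw [coe_insert]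
  exact h𝒟.insert fun D hD _ => hA D hD

def glue {X α : Type*} [DecidableEq X] [DecidableEq α] (S T : Finset X) (a b : X → Finset α)
    (y : X) : Finset α :=
  (if y ∈ S then a y else ∅) ∪ (if y ∈ T then b y else ∅)

section Glue

variable {X α : Type*} [DecidableEq X] [DecidableEq α] {S T : Finset X} {a b : X → Finset α}

lemma pairwiseDisjoint_glue (ha : (S : Set X).PairwiseDisjoint a)
    (hb : (T : Set X).PairwiseDisjoint b) (hab : ∀ y ∈ S, ∀ z ∈ T, Disjoint (a y) (b z)) :
    ((S ∪ T : Finset X) : Set X).PairwiseDisjoint (glue S T a b) := by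
  intro y _ z _ hyz
  simp only [Function.onFun, glue, disjoint_union_left, disjoint_union_right]
  refine ⟨⟨?_, ?_⟩, ?_, ?_⟩ <;> split_ifs with h₁ h₂ <;>
    first
    | exact disjoint_empty_left _ | exact disjoint_empty_right _ | exact ha h₁ h₂ hyz
    | exact hb h₁ h₂ hyz | exact hab y h₁ z h₂ | exact (hab z h₂ y h₁).symm

lemma sup_glue_subset : (S ∪ T).sup (glue S T a b) ⊆ S.sup a ∪ T.sup b :=
  Finset.sup_le fun y _ => union_subset_union
    (by split_ifs with h; exacts [le_sup h, empty_subset _])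
    (by split_ifs with h; exacts [le_sup h, empty_subset _])

end Glue

structure IsCapacity {α : Type*} (q : Finset α → ℝ) : Prop where
  map_empty : q ∅ = 0
  nonneg : ∀ A, 0 ≤ q A
  sum_le_one : ∀ 𝒟 : Finset (Finset α), (𝒟 : Set (Finset α)).PairwiseDisjoint id →
    ∑ D ∈ 𝒟, q D ≤ 1

/-- Tightness says that `toFun` is a maximal capacity: no value on a nonempty set can be raised. -/
structure TightCapacity (α : Type*) where
  toFun : Finset α → ℝ
  isCapacity : IsCapacity toFun
  tight : ∀ A : Finset α, A.Nonempty → ∀ ε > 0, ∃ 𝒟 : Finset (Finset α),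
    (𝒟 : Set (Finset α)).PairwiseDisjoint id ∧ (∀ D ∈ 𝒟, Disjoint A D) ∧
      1 - ε < toFun A + ∑ D ∈ 𝒟, toFun D

namespace TightCapacity

variable {α β : Type*}

instance : FunLike (TightCapacity α) (Finset α) ℝ where
  coe := toFun
  coe_injective x y h := by cases x; cases y; congr

instance : DecidableEq (TightCapacity α) := Classical.decEq _

@[ext] lemma ext {x y : TightCapacity α} (h : ∀ A, x A = y A) : x = y := DFunLike.ext _ _ h

section

variable (x : TightCapacity α)

@[simp] lemma map_empty : x ∅ = 0 := x.isCapacity.map_empty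

lemma nonneg (A : Finset α) : 0 ≤ x A := x.isCapacity.nonneg A

lemma sum_le_one {𝒟 : Finset (Finset α)} (h𝒟 : (𝒟 : Set (Finset α)).PairwiseDisjoint id) :
    ∑ D ∈ 𝒟, x D ≤ 1 :=
  x.isCapacity.sum_le_one 𝒟 h𝒟

lemma exists_pairwiseDisjoint_lt_add_sum {A : Finset α} (hA : A.Nonempty) {ε : ℝ} (hε : 0 < ε) :
    ∃ 𝒟 : Finset (Finset α), (𝒟 : Set (Finset α)).PairwiseDisjoint id ∧
      (∀ D ∈ 𝒟, Disjoint A D) ∧ 1 - ε < x A + ∑ D ∈ 𝒟, x D :=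
  x.tight A hA ε hε

lemma le_one (A : Finset α) : x A ≤ 1 := by
  simpa using x.sum_le_one (𝒟 := {A}) (by simp)

section DecidableEq

variable [DecidableEq α]

lemma add_le_apply_union {A B : Finset α} (hAB : Disjoint A B) : x A + x B ≤ x (A ∪ B) := by
  rcases (A ∪ B).eq_empty_or_nonempty with hU | hU
  · obtain ⟨rfl, rfl⟩ := union_eq_empty.mp hU
    simp
  refine le_of_forall_pos_le_add fun ε hε => ?_
  obtain ⟨𝒟, h𝒟, hU𝒟, hlt⟩ := x.exists_pairwiseDisjoint_lt_add_sum hU hε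
  have hB𝒟 : ∀ D ∈ 𝒟, Disjoint B D := fun D hD => (hU𝒟 D hD).mono_left subset_union_right
  have hAB𝒟 : ∀ D ∈ insert B 𝒟, Disjoint A D := by
    simpa [hAB] using fun D hD => (hU𝒟 D hD).mono_left subset_union_left
  have hsum := x.sum_le_one <| pairwiseDisjoint_insert_of_forall_disjoint
    (pairwiseDisjoint_insert_of_forall_disjoint h𝒟 hB𝒟) hAB𝒟
  rw [sum_insert_of_forall_disjoint x.map_empty hAB𝒟,
    sum_insert_of_forall_disjoint x.map_empty hB𝒟] at hsum
  linarith

lemma sum_le_apply_sup {ι : Type*} {s : Finset ι} {f : ι → Finset α}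
    (hs : (s : Set ι).PairwiseDisjoint f) : ∑ i ∈ s, x (f i) ≤ x (s.sup f) := by
  classical
  induction s using Finset.induction_on with
  | empty => simp
  | insert i s hi ih =>
    rw [coe_insert, Set.pairwiseDisjoint_insert_of_notMem (mod_cast hi)] at hs
    rw [sum_insert hi, sup_insert]
    exact (add_le_add le_rfl (ih hs.1)).trans
      (x.add_le_apply_union (Finset.disjoint_sup_right.mpr fun j hj => hs.2 j hj))

lemma sum_add_sum_le_sum_glue {S T : Finset (TightCapacity α)}
    {a b : TightCapacity α → Finset α} (hab : ∀ y ∈ S, ∀ z ∈ T, Disjoint (a y) (b z)) :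
    ∑ y ∈ S, y (a y) + ∑ y ∈ T, y (b y) ≤ ∑ y ∈ S ∪ T, y (glue S T a b y) := by
  have hS : ∑ y ∈ S, y (a y) = ∑ y ∈ S ∪ T, if y ∈ S then y (a y) else 0 := by
    rw [sum_ite_mem, union_inter_cancel_left]
  have hT : ∑ y ∈ T, y (b y) = ∑ y ∈ S ∪ T, if y ∈ T then y (b y) else 0 := by
    rw [sum_ite_mem, union_inter_cancel_right]
  rw [hS, hT, ← sum_add_distrib]
  refine sum_le_sum fun y _ => ?_
  simp only [glue]
  split_ifs with h₁ h₂ h₂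
  · exact y.add_le_apply_union (hab y h₁ y h₂)
  all_goals simp

end DecidableEq

lemma exists_disjoint_lt_add [Nonempty α] (A : Finset α) {ε : ℝ} (hε : 0 < ε) :
    ∃ B, Disjoint A B ∧ 1 - ε < x A + x B := by
  classical
  have key : ∀ A : Finset α, A.Nonempty → ∃ B, Disjoint A B ∧ 1 - ε < x A + x B := by
    intro A hA
    obtain ⟨𝒟, h𝒟, hA𝒟, hlt⟩ := x.exists_pairwiseDisjoint_lt_add_sum hA hε
    exact ⟨𝒟.sup id, Finset.disjoint_sup_right.mpr hA𝒟, hlt.trans_le (by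
      simpa using add_le_add_left (x.sum_le_apply_sup (f := id) h𝒟) (x A))⟩
  rcases A.eq_empty_or_nonempty with rfl | hA
  · obtain ⟨i⟩ := ‹Nonempty α›
    obtain ⟨B, hiB, hlt⟩ := key {i} (singleton_nonempty i)
    exact ⟨{i} ∪ B, disjoint_empty_left _, by simpa using hlt.trans_le (x.add_le_apply_union hiB)⟩
  · exact key A hA

def map [Nonempty α] (σ : α ↪ β) (x : TightCapacity α) : TightCapacity β where
  toFun A := x (A.preimage σ σ.injective.injOn)
  isCapacity :=
    { map_empty := by simp
      nonneg := fun _ => x.nonneg _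
      sum_le_one := fun 𝒟 h𝒟 => by
        classical
        exact (x.sum_le_apply_sup fun D hD E hE hDE => disjoint_preimage (h𝒟 hD hE hDE)).trans
          (x.le_one _) }
  tight A _ ε hε := by
    obtain ⟨B, hB, hlt⟩ := x.exists_disjoint_lt_add (A.preimage σ σ.injective.injOn) hε
    refine ⟨{B.map σ}, by simp, ?_, by simpa using hlt⟩
    simp only [mem_singleton, forall_eq, disjoint_left, Finset.mem_map]
    rintro _ ha ⟨b, hb, rfl⟩
    exact disjoint_left.mp hB (mem_preimage.mpr ha) hb

@[simp] lemma map_apply [Nonempty α] (σ : α ↪ β) (A : Finset β) :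
    x.map σ A = x (A.preimage σ σ.injective.injOn) :=
  rfl

lemma map_injective [Nonempty α] (σ : α ↪ β) : Function.Injective (map σ) := fun x y h =>
  ext fun A => by simpa using DFunLike.congr_fun h (A.map σ)

end

/-- `δ F = max 0 (s - 1)`, where `s` is the supremum of `∑ x ∈ F, x (a x)` over assignments `a`
of pairwise disjoint sets to the points of `F`. -/
def delta (F : Finset (TightCapacity α)) : ℝ :=
  sSup (insert 1 ((fun a => ∑ x ∈ F, x (a x)) ''
    {a : TightCapacity α → Finset α | (F : Set (TightCapacity α)).PairwiseDisjoint a})) - 1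

section Delta

variable {F G : Finset (TightCapacity α)} {a : TightCapacity α → Finset α}

lemma sum_le_card (F : Finset (TightCapacity α)) (a : TightCapacity α → Finset α) :
    ∑ x ∈ F, x (a x) ≤ #F :=
  (sum_le_card_nsmul F _ 1 fun x _ => x.le_one _).trans (by simp)

lemma bddAbove_delta_values (F : Finset (TightCapacity α)) :
    BddAbove (insert 1 ((fun a => ∑ x ∈ F, x (a x)) ''
      {a : TightCapacity α → Finset α | (F : Set (TightCapacity α)).PairwiseDisjoint a})) := by
  refine ⟨#F + 1, ?_⟩
  rintro _ (rfl | ⟨a, -, rfl⟩)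
  · simp
  · linarith [sum_le_card F a]

lemma sum_le_delta_add_one (ha : (F : Set (TightCapacity α)).PairwiseDisjoint a) :
    ∑ x ∈ F, x (a x) ≤ delta F + 1 := by
  rw [delta, sub_add_cancel]
  exact le_csSup (bddAbove_delta_values F) (Set.mem_insert_of_mem _ ⟨a, ha, rfl⟩)

lemma delta_le {c : ℝ} (hc : 0 ≤ c)
    (h : ∀ a, (F : Set (TightCapacity α)).PairwiseDisjoint a → ∑ x ∈ F, x (a x) ≤ c + 1) :
    delta F ≤ c := by
  rw [delta, sub_le_iff_le_add]
  refine csSup_le (Set.insert_nonempty _ _) ?_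
  rintro _ (rfl | ⟨a, ha, rfl⟩)
  exacts [by linarith, h a ha]

lemma delta_nonneg (F : Finset (TightCapacity α)) : 0 ≤ delta F := by
  rw [delta, sub_nonneg]
  exact le_csSup (bddAbove_delta_values F) (Set.mem_insert _ _)

lemma delta_le_card (F : Finset (TightCapacity α)) : delta F ≤ #F :=
  delta_le (Nat.cast_nonneg _) fun a _ => by linarith [sum_le_card F a]

lemma delta_eq_zero_of_card_le_one (hF : #F ≤ 1) : delta F = 0 :=
  le_antisymm (delta_le le_rfl fun a _ => by
    linarith [sum_le_card F a, (by exact_mod_cast hF : (#F : ℝ) ≤ 1)]) (delta_nonneg F)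

lemma delta_image_map_le [Nonempty α] (σ : α ↪ β) (F : Finset (TightCapacity α)) :
    delta (F.image (map σ)) ≤ delta F := by
  refine delta_le (delta_nonneg F) fun a ha => ?_
  rw [sum_image (map_injective σ).injOn]
  refine sum_le_delta_add_one (a := fun x => (a (map σ x)).preimage σ σ.injective.injOn)
    fun x hx y hy hxy => disjoint_preimage ?_
  exact ha (mem_image_of_mem _ hx) (mem_image_of_mem _ hy) ((map_injective σ).ne hxy)

variable [DecidableEq α]

lemma delta_mono (h : F ⊆ G) : delta F ≤ delta G := by
  refine delta_le (delta_nonneg G) fun a ha => ?_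
  have hglue := sum_add_sum_le_sum_glue (S := F) (T := G) (a := a) (b := fun _ => ∅)
    fun _ _ _ _ => disjoint_empty_right _
  rw [union_eq_right.mpr h] at hglue
  have hG := sum_le_delta_add_one (F := G) <| union_eq_right.mpr h ▸
    pairwiseDisjoint_glue ha (fun _ _ _ _ _ => disjoint_empty_left _)
      fun _ _ _ _ => disjoint_empty_right _
  simp only [map_empty, sum_const_zero, add_zero] at hglue
  linarith

lemma sum_add_apply_le_delta_add_one (hFG : F ⊆ G)
    (ha : (F : Set (TightCapacity α)).PairwiseDisjoint a)
    {b : TightCapacity α} (hb : b ∈ G) {E : Finset α} (hE : ∀ y ∈ F, Disjoint (a y) E) :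
    ∑ y ∈ F, y (a y) + b E ≤ delta G + 1 := by
  have hglue := sum_add_sum_le_sum_glue (S := F) (T := {b}) (a := a) (b := fun _ => E)
    fun y hy _ _ => hE y hy
  rw [sum_singleton] at hglue
  refine hglue.trans <| (sum_le_delta_add_one <| pairwiseDisjoint_glue ha (by simp)
    fun y hy _ _ => hE y hy).trans ?_
  gcongr
  exact delta_mono (union_subset hFG (singleton_subset_iff.mpr hb))

lemma delta_pair_pos [Nonempty α] {x y : TightCapacity α} (hxy : x ≠ y) : 0 < delta {x, y} := by
  obtain ⟨A, hA⟩ : ∃ A, x A ≠ y A := by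
    by_contra! h
    exact hxy (ext h)
  wlog hlt : y A < x A generalizing x y
  · rw [pair_comm]
    exact this hxy.symm hA.symm (lt_of_le_of_ne (not_lt.mp hlt) hA)
  obtain ⟨B, hAB, hB⟩ := y.exists_disjoint_lt_add A (sub_pos.mpr hlt)
  have hsum := sum_add_apply_le_delta_add_one (F := {x}) (G := {x, y}) (a := fun _ => A)
    (by simp) (by simp) (mem_insert_of_mem (mem_singleton_self y)) (E := B) (by simpa using hAB)
  rw [sum_singleton] at hsum
  linarith

lemma delta_eq_zero_iff [Nonempty α] (F : Finset (TightCapacity α)) : delta F = 0 ↔ #F ≤ 1 := by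
  refine ⟨fun h => ?_, delta_eq_zero_of_card_le_one⟩
  by_contra! hF
  obtain ⟨x, hx, y, hy, hxy⟩ := one_lt_card.mp hF
  have := (delta_pair_pos hxy).trans_le
    (delta_mono (insert_subset hx (singleton_subset_iff.mpr hy)))
  linarith

lemma delta_triangle [Nonempty α] (A B C : Finset (TightCapacity α)) (hB : B.Nonempty) :
    delta (A ∪ C) ≤ delta (A ∪ B) + delta (B ∪ C) := by
  obtain ⟨b, hb⟩ := hB
  refine delta_le (add_nonneg (delta_nonneg _) (delta_nonneg _)) fun a ha =>
    le_of_forall_pos_le_add fun ε hε => ?_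
  set U := (C \ A).sup a
  obtain ⟨W, hUW, hW⟩ := b.exists_disjoint_lt_add U hε
  have hA := sum_add_apply_le_delta_add_one (F := A) (G := A ∪ B) (a := a) subset_union_left
    (ha.subset (coe_subset.mpr subset_union_left)) (mem_union_right _ hb) (E := U) fun y hy =>
      Finset.disjoint_sup_right.mpr fun z hz =>
        ha (by simp [hy]) (by simp [(mem_sdiff.mp hz).1])
          (by rintro rfl; exact (mem_sdiff.mp hz).2 hy)
  have hC := sum_add_apply_le_delta_add_one (F := C \ A) (G := B ∪ C) (a := a)
    (sdiff_subset.trans subset_union_right)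
    (ha.subset (coe_subset.mpr (sdiff_subset.trans subset_union_right))) (mem_union_left _ hb)
    (E := W)
    fun y hy => hUW.mono_left (le_sup hy)
  have hsplit : ∑ y ∈ A ∪ C, y (a y) = ∑ y ∈ A, y (a y) + ∑ y ∈ C \ A, y (a y) := by
    rw [← sum_union disjoint_sdiff, union_sdiff_self_eq_union]
  linarith

end Delta

variable (α) in
def diversity [DecidableEq α] [Nonempty α] : Diversity (TightCapacity α) :=
  ⟨delta, delta_nonneg, delta_eq_zero_iff, delta_triangle⟩

@[simp] lemma diversity_delta [DecidableEq α] [Nonempty α] : (diversity α).delta = delta :=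
  rfl

section Hyperconvex

variable [DecidableEq α] (r : Finset (TightCapacity α) → ℝ)

def excess (𝒜 : Finset (Finset (TightCapacity α))) (a : TightCapacity α → Finset α) : ℝ :=
  ∑ y ∈ 𝒜.sup id, y (a y) - ∑ Y ∈ 𝒜, r Y

/-- A point `z` with `δ (insert z Y) ≤ r Y` must satisfy `z D + excess r {Y} a ≤ 1` whenever `D`
is disjoint from the sets `a y`.  Admissibility asks this for disjoint families of sets `D` and
for arbitrary `𝒜`; a maximal admissible function is then the required point. -/
structure IsAdmissible (q : Finset α → ℝ) : Prop where
  map_empty : q ∅ = 0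
  nonneg : ∀ A, 0 ≤ q A
  sum_add_excess_le_one : ∀ (𝒟 : Finset (Finset α)) (𝒜 : Finset (Finset (TightCapacity α)))
    (a : TightCapacity α → Finset α), (𝒟 : Set (Finset α)).PairwiseDisjoint id →
    ((𝒜.sup id : Finset (TightCapacity α)) : Set (TightCapacity α)).PairwiseDisjoint a →
    (∀ D ∈ 𝒟, Disjoint D ((𝒜.sup id).sup a)) → ∑ D ∈ 𝒟, q D + excess r 𝒜 a ≤ 1

variable {r}

lemma IsAdmissible.le_one {q : Finset α → ℝ} (hq : IsAdmissible r q) (A : Finset α) : q A ≤ 1 := by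
  simpa [excess] using hq.sum_add_excess_le_one {A} ∅ (fun _ => ∅) (by simp) (by simp) (by simp)

lemma isAdmissible_zero
    (hr : ∀ 𝒜 : Finset (Finset (TightCapacity α)), delta (𝒜.sup id) ≤ ∑ A ∈ 𝒜, r A) :
    IsAdmissible r 0 where
  map_empty := rfl
  nonneg _ := le_rfl
  sum_add_excess_le_one 𝒟 𝒜 a _ ha _ := by
    simp only [Pi.zero_apply, sum_const_zero, zero_add, excess]
    linarith [sum_le_delta_add_one ha, hr 𝒜]

lemma bddAbove_range_apply {c : Set (Finset α → ℝ)} (hc : ∀ q ∈ c, IsAdmissible r q)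
    (A : Finset α) : BddAbove (Set.range fun q : c => (q : Finset α → ℝ) A) :=
  ⟨1, by rintro _ ⟨q, rfl⟩; exact (hc q q.2).le_one A⟩

lemma isAdmissible_iSup_of_isChain {c : Set (Finset α → ℝ)} (hc : ∀ q ∈ c, IsAdmissible r q)
    (hchain : IsChain (· ≤ ·) c) [Nonempty c] :
    IsAdmissible r fun A => ⨆ q : c, (q : Finset α → ℝ) A := by
  have hbdd := bddAbove_range_apply hc
  have : IsDirectedOrder c := ⟨fun p q => by
    obtain ⟨s, hs, hps, hqs⟩ := hchain.directedOn p p.2 q q.2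
    exact ⟨⟨s, hs⟩, hps, hqs⟩⟩
  have htends (A : Finset α) : Filter.Tendsto (fun q : c => (q : Finset α → ℝ) A) Filter.atTop
      (nhds (⨆ q : c, (q : Finset α → ℝ) A)) :=
    tendsto_atTop_ciSup (fun p q hpq => hpq A) (hbdd A)
  obtain ⟨q₀⟩ := ‹Nonempty c›
  refine ⟨by simp [(hc _ _).map_empty],
    fun A => ((hc q₀ q₀.2).nonneg A).trans (le_ciSup (hbdd A) q₀),
    fun 𝒟 𝒜 a h𝒟 ha hD => ?_⟩
  exact le_of_tendsto' ((tendsto_finsetSum 𝒟 fun D _ => htends D).add_const _)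
    fun q => (hc q q.2).sum_add_excess_le_one 𝒟 𝒜 a h𝒟 ha hD

lemma exists_maximal_isAdmissible
    (hr : ∀ 𝒜 : Finset (Finset (TightCapacity α)), delta (𝒜.sup id) ≤ ∑ A ∈ 𝒜, r A) :
    ∃ q, Maximal (IsAdmissible r) q := by
  have hub (c) (hc : c ⊆ {q | IsAdmissible r q}) (hchain : IsChain (· ≤ ·) c) (q) (hq : q ∈ c) :
      ∃ ub ∈ {q | IsAdmissible r q}, ∀ p ∈ c, p ≤ ub := by
    have : Nonempty c := ⟨⟨q, hq⟩⟩
    refine ⟨_, isAdmissible_iSup_of_isChain hc hchain, fun p hp A => ?_⟩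
    exact le_ciSup (f := fun q : c => (q : Finset α → ℝ) A) (bddAbove_range_apply hc A) ⟨p, hp⟩
  obtain ⟨q, -, hq⟩ := zorn_le_nonempty₀ _ hub 0 (isAdmissible_zero hr)
  exact ⟨q, hq⟩

variable {q : Finset α → ℝ}

lemma excess_add_excess_le_excess_glue (hr : 0 ≤ r) {𝒜 ℬ : Finset (Finset (TightCapacity α))}
    {a b : TightCapacity α → Finset α}
    (hab : ∀ y ∈ 𝒜.sup id, ∀ z ∈ ℬ.sup id, Disjoint (a y) (b z)) :
    excess r 𝒜 a + excess r ℬ b ≤ excess r (𝒜 ∪ ℬ) (glue (𝒜.sup id) (ℬ.sup id) a b) := by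
  have hsum := sum_add_sum_le_sum_glue hab
  have hr' := sum_union_inter (s₁ := 𝒜) (s₂ := ℬ) (f := r)
  have hinter : 0 ≤ ∑ Y ∈ 𝒜 ∩ ℬ, r Y := sum_nonneg fun Y _ => hr Y
  rw [excess, excess, excess, sup_union, sup_eq_union]
  linarith

/-- At a maximal admissible `q`, raising `q A` by `γ` breaks some constraint, which must then
involve `A`. -/
lemma exists_sum_add_excess_gt_of_maximal (hq : Maximal (IsAdmissible r) q) {A : Finset α}
    (hA : A.Nonempty) {γ : ℝ} (hγ : 0 < γ) :
    ∃ (𝒟 : Finset (Finset α)) (𝒜 : Finset (Finset (TightCapacity α)))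
      (a : TightCapacity α → Finset α),
      A ∈ 𝒟 ∧ (𝒟 : Set (Finset α)).PairwiseDisjoint id ∧
      ((𝒜.sup id : Finset (TightCapacity α)) : Set (TightCapacity α)).PairwiseDisjoint a ∧
      (∀ D ∈ 𝒟, Disjoint D ((𝒜.sup id).sup a)) ∧ 1 - γ < ∑ D ∈ 𝒟, q D + excess r 𝒜 a := by
  by_contra! h
  have hq' : IsAdmissible r (Function.update q A (q A + γ)) := by
    refine ⟨by simp [Function.update_of_ne hA.ne_empty.symm, hq.prop.map_empty], fun B => ?_,
      fun 𝒟 𝒜 a h𝒟 ha hD => ?_⟩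
    · rcases eq_or_ne B A with rfl | hB
      · simpa using add_nonneg (hq.prop.nonneg B) hγ.le
      · simpa [hB] using hq.prop.nonneg B
    by_cases hA𝒟 : A ∈ 𝒟
    · rw [sum_update_of_mem hA𝒟]
      linarith [h 𝒟 𝒜 a hA𝒟 h𝒟 ha hD, sum_eq_add_sum_sdiff_singleton_of_mem hA𝒟 q]
    · rw [sum_update_of_notMem hA𝒟]
      exact hq.prop.sum_add_excess_le_one 𝒟 𝒜 a h𝒟 ha hD
  have := congrFun (hq.eq_of_ge hq' (le_update_self_iff.mpr (by linarith))) A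
  simp only [Function.update_self] at this
  linarith

/-- Raise `q` at `U = ⋃ a y` and glue the configuration obtained, which avoids `U`, to `(𝒜, a)`. -/
lemma excess_le_of_maximal (hr : 0 ≤ r) (hq : Maximal (IsAdmissible r) q)
    {𝒜 : Finset (Finset (TightCapacity α))} {a : TightCapacity α → Finset α}
    (ha : ((𝒜.sup id : Finset (TightCapacity α)) : Set (TightCapacity α)).PairwiseDisjoint a) :
    excess r 𝒜 a ≤ q ((𝒜.sup id).sup a) := by
  set U := (𝒜.sup id).sup a
  rcases U.eq_empty_or_nonempty with hU | hU
  · have ha0 : ∀ y ∈ 𝒜.sup id, a y = ∅ := fun y hy => subset_empty.mp (hU ▸ le_sup hy)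
    rw [hU, hq.prop.map_empty, excess, sum_congr rfl fun y hy => by rw [ha0 y hy], sub_nonpos]
    simpa using sum_nonneg fun Y _ => hr Y
  refine le_of_forall_pos_le_add fun γ hγ => ?_
  obtain ⟨𝒟, ℬ, b, hU𝒟, h𝒟, hb, hD, hgt⟩ := exists_sum_add_excess_gt_of_maximal hq hU hγ
  have hab : ∀ y ∈ 𝒜.sup id, ∀ z ∈ ℬ.sup id, Disjoint (a y) (b z) := fun y hy z hz =>
    ((hD U hU𝒟).mono_left (le_sup hy)).mono_right (le_sup hz)
  have hcomb := hq.prop.sum_add_excess_le_one (𝒟.erase U) (𝒜 ∪ ℬ) (glue (𝒜.sup id) (ℬ.sup id) a b)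
    (h𝒟.subset (coe_subset.mpr (erase_subset _ _)))
    (by rw [sup_union, sup_eq_union]; exact pairwiseDisjoint_glue ha hb hab)
    fun D hD' => by
      rw [sup_union, sup_eq_union]
      refine Disjoint.mono_right sup_glue_subset
        (disjoint_union_right.mpr ⟨?_, hD D (mem_of_mem_erase hD')⟩)
      exact h𝒟 (mem_of_mem_erase hD') hU𝒟 (ne_of_mem_erase hD')
  rw [← add_sum_erase _ _ hU𝒟] at hgt
  linarith [excess_add_excess_le_excess_glue hr hab]

def ofMaximal (hr : 0 ≤ r) (hq : Maximal (IsAdmissible r) q) : TightCapacity α where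
  toFun := q
  isCapacity :=
    { map_empty := hq.prop.map_empty
      nonneg := hq.prop.nonneg
      sum_le_one := fun 𝒟 h𝒟 => by
        simpa [excess] using hq.prop.sum_add_excess_le_one 𝒟 ∅ (fun _ => ∅) h𝒟 (by simp) (by simp) }
  tight A hA ε hε := by
    obtain ⟨𝒟, 𝒜, a, hA𝒟, h𝒟, ha, hD, hgt⟩ := exists_sum_add_excess_gt_of_maximal hq hA hε
    have habs := excess_le_of_maximal hr hq ha
    have hUD : ∀ D ∈ 𝒟.erase A, Disjoint ((𝒜.sup id).sup a) D := fun D hD' =>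
      (hD D (mem_of_mem_erase hD')).symm
    refine ⟨insert ((𝒜.sup id).sup a) (𝒟.erase A),
      pairwiseDisjoint_insert_of_forall_disjoint
        (h𝒟.subset (coe_subset.mpr (erase_subset _ _))) hUD,
      ?_, ?_⟩
    · simp only [mem_insert, forall_eq_or_imp]
      exact ⟨hD A hA𝒟, fun D hD' => h𝒟 hA𝒟 (mem_of_mem_erase hD') (ne_of_mem_erase hD').symm⟩
    · rw [← add_sum_erase _ _ hA𝒟] at hgt
      rw [sum_insert_of_forall_disjoint hq.prop.map_empty hUD]
      linarith

@[simp] lemma ofMaximal_apply (hr : 0 ≤ r) (hq : Maximal (IsAdmissible r) q) (A : Finset α) :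
    ofMaximal hr hq A = q A :=
  rfl

lemma delta_insert_ofMaximal_le (hr : ∀ Y, delta Y ≤ r Y) (hr₀ : 0 ≤ r)
    (hq : Maximal (IsAdmissible r) q) (Y : Finset (TightCapacity α)) :
    delta (insert (ofMaximal hr₀ hq) Y) ≤ r Y := by
  set z := ofMaximal hr₀ hq
  by_cases hzY : z ∈ Y
  · rw [insert_eq_of_mem hzY]
    exact hr Y
  refine delta_le (hr₀ Y) fun a ha => ?_
  have hY : ((({Y} : Finset (Finset (TightCapacity α))).sup id : Finset (TightCapacity α)) :
      Set (TightCapacity α)).PairwiseDisjoint a := by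
    simpa using ha.subset (coe_subset.mpr (subset_insert z Y))
  have hzD : Disjoint (a z) (Y.sup a) := Finset.disjoint_sup_right.mpr fun y hy =>
    ha (mem_insert_self z Y) (mem_insert_of_mem hy) (ne_of_mem_of_not_mem hy hzY).symm
  have := hq.prop.sum_add_excess_le_one {a z} {Y} a (by simp) hY (by simpa using hzD)
  simp only [sum_singleton, excess, sup_singleton, id] at this
  rw [sum_insert hzY, ofMaximal_apply]
  linarith

theorem hyperconvex_diversity [Nonempty α] : (diversity α).Hyperconvex := by
  intro r _ hr
  have hrY (Y : Finset (TightCapacity α)) : delta Y ≤ r Y := by simpa using hr {Y}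
  have hr₀ : 0 ≤ r := fun Y => (delta_nonneg Y).trans (hrY Y)
  obtain ⟨q, hq⟩ := exists_maximal_isAdmissible hr
  exact ⟨ofMaximal hr₀ hq, delta_insert_ofMaximal_le hrY hr₀ hq⟩

end Hyperconvex

lemma sum_apply_eq_sum_apply_preimage_add {F : Finset (TightCapacity ℕ)}
    (hF : F.image (map (addRightEmbedding 1)) = F) (A : Finset ℕ) (n : ℕ) :
    ∑ x ∈ F, x A = ∑ x ∈ F, x (A.preimage (· + n) (add_left_injective n).injOn) := by
  induction n with
  | zero => congr! with x; ext; simp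
  | succ n ih =>
    conv_lhs => rw [ih, ← hF, sum_image (map_injective _).injOn]
    refine sum_congr rfl fun x _ => congrArg x ?_
    ext m
    simp [add_assoc, add_comm 1 n]

theorem image_map_succ_ne {F : Finset (TightCapacity ℕ)} (hF : F.Nonempty) :
    F.image (map (addRightEmbedding 1)) ≠ F := by
  intro hinv
  obtain ⟨x, hx⟩ := hF
  obtain ⟨B, -, hB⟩ := x.exists_disjoint_lt_add ∅ one_pos
  have hsum := sum_apply_eq_sum_apply_preimage_add hinv B (B.sup id + 1)
  have hempty : B.preimage (· + (B.sup id + 1)) (add_left_injective _).injOn = ∅ := by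
    ext m
    simp only [mem_preimage, notMem_empty, iff_false]
    intro hm
    have : m + (B.sup id + 1) ≤ B.sup id := le_sup (f := id) hm
    omega
  rw [hempty] at hsum
  simp only [map_empty, sum_const_zero] at hsum
  have := single_le_sum (fun y _ => y.nonneg B) hx
  rw [sub_self, map_empty, zero_add] at hB
  linarith

end TightCapacity

end

/-- There exist a hyperconvex diversity `(X, δ)` with bounded induced
metric space and a map `T : X → X`, nonexpansive with respect to the induced metric,
such that no nonempty finite subset `F ⊆ X` satisfies `T(F) = F`; that is, `T` has no
fixed point with respect to the diversity. -/
theorem exists_nonexpansive_without_diversity_fixed_point :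
    ∃ (X : Type) (_ : DecidableEq X) (D : Diversity X) (T : X → X),
      D.Hyperconvex ∧
      (∃ M : ℝ, ∀ x y : X, D.delta {x, y} ≤ M) ∧
      (∀ x y : X, D.delta {T x, T y} ≤ D.delta {x, y}) ∧
      ∀ F : Finset X, F.Nonempty → F.image T ≠ F := by
  refine ⟨TightCapacity ℕ, inferInstance, TightCapacity.diversity ℕ,
    TightCapacity.map (addRightEmbedding 1), TightCapacity.hyperconvex_diversity,
    ⟨2, fun x y => ?_⟩,
    fun x y => by simpa using TightCapacity.delta_image_map_le (addRightEmbedding 1) {x, y},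
    fun F hF => TightCapacity.image_map_succ_ne hF⟩
  exact (TightCapacity.delta_le_card _).trans (by exact_mod_cast card_le_two)
end
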